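/- arXiv:1710.04058 — 5 statements merged into one kernel-verified Lean document; each statement's English description precedes it below -/
import Mathlib

section
/- For n ≥ 3 there exists a unique surjective ℂ-algebra homomorphism ψ_n : H_n → TL_n^e satisfying ψ_n(ρ) = ρ, ψ_n(ρ^{-1}) = ρ^{-1} and ψ_n(T_i) = e_i + t^{-1/2} for all i; moreover the kernel of ψ_n is the two-sided ideal of H_n generated by the elements T_iT_{i+1}T_i − t^{-1/2}T_iT_{i+1} − t^{-1/2}T_{i+1}T_i + t^{-1}T_i + t^{-1}T_{i+1} − t^{-3/2} for i ∈ ℤ/nℤ (indices modulo n). -/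
noncomputable section

namespace SkeinTL

inductive TLgen (n : ℕ) : Type
  | e : ZMod n → TLgen n
  | r : TLgen n
  | ri : TLgen n

abbrev FA (n : ℕ) : Type := FreeAlgebra ℂ (TLgen n)

def ef (n : ℕ) (i : ZMod n) : FA n := FreeAlgebra.ι ℂ (TLgen.e i)
def rf (n : ℕ) : FA n := FreeAlgebra.ι ℂ TLgen.r
def rif (n : ℕ) : FA n := FreeAlgebra.ι ℂ TLgen.ri

/-- The defining relations of the algebra `TL_n^e` (for `n ≥ 3`): all the defining
relations of the extended affine Temperley-Lieb algebra except the relation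
`(ρe₁)^{n-1} = ρ^n(ρe₁)`.  Indices are taken modulo `n`. -/
inductive TLerel (t4 : ℂ) (n : ℕ) : FA n → FA n → Prop
  | esq (i : ZMod n) :
      TLerel t4 n (ef n i * ef n i) ((-(t4 ^ 2 + t4⁻¹ ^ 2)) • ef n i)
  | comm (i j : ZMod n) (h1 : i - j ≠ 1) (h2 : i - j ≠ -1) :
      TLerel t4 n (ef n i * ef n j) (ef n j * ef n i)
  | eplus (i : ZMod n) :
      TLerel t4 n (ef n i * ef n (i + 1) * ef n i) (ef n i)
  | eminus (i : ZMod n) :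
      TLerel t4 n (ef n i * ef n (i - 1) * ef n i) (ef n i)
  | rer (i : ZMod n) :
      TLerel t4 n (rf n * ef n i) (ef n (i + 1) * rf n)
  | rri : TLerel t4 n (rf n * rif n) 1
  | rir : TLerel t4 n (rif n * rf n) 1

/-- The algebra `TL_n^e`. -/
abbrev TLe (t4 : ℂ) (n : ℕ) : Type := RingQuot (TLerel t4 n)

def Ee (t4 : ℂ) (n : ℕ) (i : ZMod n) : TLe t4 n :=
  RingQuot.mkAlgHom ℂ (TLerel t4 n) (ef n i)
def Re (t4 : ℂ) (n : ℕ) : TLe t4 n := RingQuot.mkAlgHom ℂ (TLerel t4 n) (rf n)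
def Rie (t4 : ℂ) (n : ℕ) : TLe t4 n := RingQuot.mkAlgHom ℂ (TLerel t4 n) (rif n)
def Cte (t4 : ℂ) (n : ℕ) (c : ℂ) : TLe t4 n := algebraMap ℂ (TLe t4 n) c

/-- The two-sided ideal of a ring generated by a set: the smallest two-sided ideal
containing the set. -/
def tsSpan {R : Type*} [NonUnitalNonAssocRing R] (s : Set R) : TwoSidedIdeal R :=
  sInf {I : TwoSidedIdeal R | s ⊆ I}

/-- Generators of the extended affine Hecke algebra: `T i` (`i : ZMod n`), `ρ`, `ρ⁻¹`. -/
inductive Hgen (n : ℕ) : Type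
  | T : ZMod n → Hgen n
  | r : Hgen n
  | ri : Hgen n

abbrev FH (n : ℕ) : Type := FreeAlgebra ℂ (Hgen n)

def thf (n : ℕ) (i : ZMod n) : FH n := FreeAlgebra.ι ℂ (Hgen.T i)
def rhf (n : ℕ) : FH n := FreeAlgebra.ι ℂ Hgen.r
def rihf (n : ℕ) : FH n := FreeAlgebra.ι ℂ Hgen.ri

/-- The defining relations of the extended affine Hecke algebra `H_n` of type
`Â_{n-1}` (indices modulo `n`): `(T_i − t^{-1/2})(T_i + t^{1/2}) = 0`;
`T_iT_j = T_jT_i` if `i - j ≠ ±1`; `T_iT_{i+1}T_i = T_{i+1}T_iT_{i+1}`;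
`ρT_i = T_{i+1}ρ`; `ρρ⁻¹ = 1 = ρ⁻¹ρ`. -/
inductive Hrel (t4 : ℂ) (n : ℕ) : FH n → FH n → Prop
  | quad (i : ZMod n) :
      Hrel t4 n ((thf n i - algebraMap ℂ (FH n) (t4⁻¹ ^ 2)) *
        (thf n i + algebraMap ℂ (FH n) (t4 ^ 2))) 0
  | comm (i j : ZMod n) (h1 : i - j ≠ 1) (h2 : i - j ≠ -1) :
      Hrel t4 n (thf n i * thf n j) (thf n j * thf n i)
  | braid (i : ZMod n) :
      Hrel t4 n (thf n i * thf n (i + 1) * thf n i)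
        (thf n (i + 1) * thf n i * thf n (i + 1))
  | rT (i : ZMod n) : Hrel t4 n (rhf n * thf n i) (thf n (i + 1) * rhf n)
  | rri : Hrel t4 n (rhf n * rihf n) 1
  | rir : Hrel t4 n (rihf n * rhf n) 1

/-- The extended affine Hecke algebra `H_n` of type `Â_{n-1}`. -/
abbrev H (t4 : ℂ) (n : ℕ) : Type := RingQuot (Hrel t4 n)

def Th (t4 : ℂ) (n : ℕ) (i : ZMod n) : H t4 n :=
  RingQuot.mkAlgHom ℂ (Hrel t4 n) (thf n i)
def Rh (t4 : ℂ) (n : ℕ) : H t4 n := RingQuot.mkAlgHom ℂ (Hrel t4 n) (rhf n)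
def Rih (t4 : ℂ) (n : ℕ) : H t4 n := RingQuot.mkAlgHom ℂ (Hrel t4 n) (rihf n)
def Cth (t4 : ℂ) (n : ℕ) (c : ℂ) : H t4 n := algebraMap ℂ (H t4 n) c

/-- The defining conditions of `ψ_n : H_n → TL_n^e`: surjective, `ρ ↦ ρ`, `ρ⁻¹ ↦ ρ⁻¹`
and `T_i ↦ e_i + t^{-1/2}` for all `i`. -/
def psiCond (t4 : ℂ) (n : ℕ) (f : H t4 n →ₐ[ℂ] TLe t4 n) : Prop :=
  Function.Surjective f ∧ f (Rh t4 n) = Re t4 n ∧ f (Rih t4 n) = Rie t4 n ∧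
    ∀ i : ZMod n, f (Th t4 n i) = Ee t4 n i + Cte t4 n (t4⁻¹ ^ 2)

/-! ### Auxiliary generic computations in a `ℂ`-algebra -/

section Generic
variable {A : Type*} [Ring A] [Algebra ℂ A] {u : ℂ}

local notation "CC" => algebraMap ℂ A

lemma gquad_sq (hu : u ≠ 0) {T : A} (h : (T - CC u⁻¹) * (T + CC u) = 0) :
    T * T = (u⁻¹ - u) • T + 1 := by
  have e : T * T = u⁻¹ • T - u • T + (u⁻¹ * u) • (1 : A) := by
    simp only [Algebra.algebraMap_eq_smul_one] at h
    linear_combination (norm := skip) h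
    simp only [sub_mul, mul_add, add_mul, mul_sub, smul_mul_assoc, mul_smul_comm,
      mul_one, one_mul, smul_smul]
    match_scalars <;> (field_simp; try ring; try simp [← mul_pow, mul_inv_cancel₀ hu, mul_inv_cancel₀ (pow_ne_zero 5 hu)])
  rw [e]; match_scalars <;> (field_simp; try ring; try simp [← mul_pow, mul_inv_cancel₀ hu, mul_inv_cancel₀ (pow_ne_zero 5 hu)])

lemma gsq_sub (hu : u ≠ 0) {T : A} (hT : T * T = (u⁻¹ - u) • T + 1) :
    (T - CC u⁻¹) * (T - CC u⁻¹) = (-(u + u⁻¹)) • (T - CC u⁻¹) := by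
  simp only [Algebra.algebraMap_eq_smul_one]
  simp only [sub_mul, mul_sub, smul_mul_assoc, mul_smul_comm, mul_one, one_mul,
    smul_smul, smul_sub]
  rw [hT]
  match_scalars <;> (field_simp; try ring; try simp [← mul_pow, mul_inv_cancel₀ hu, mul_inv_cancel₀ (pow_ne_zero 5 hu)])

lemma gkey (hu : u ≠ 0) {T U : A} (hT : T * T = (u⁻¹ - u) • T + 1) :
    (T - CC u⁻¹) * (U - CC u⁻¹) * (T - CC u⁻¹) - (T - CC u⁻¹)
      = T * U * T - u⁻¹ • (T * U) - u⁻¹ • (U * T)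
        + (u⁻¹ ^ 2) • T + (u⁻¹ ^ 2) • U - CC (u⁻¹ ^ 3) := by
  simp only [Algebra.algebraMap_eq_smul_one]
  simp only [sub_mul, mul_sub, smul_mul_assoc, mul_smul_comm, mul_one, one_mul,
    smul_smul, smul_sub]
  rw [hT]
  match_scalars <;> (field_simp; try ring; try simp [← mul_pow, mul_inv_cancel₀ hu, mul_inv_cancel₀ (pow_ne_zero 5 hu)])

lemma gsq_add (hu : u ≠ 0) {E : A} (h : E * E = (-(u + u⁻¹)) • E) :
    (E + CC u⁻¹) * (E + CC u⁻¹) = (u⁻¹ - u) • (E + CC u⁻¹) + 1 := by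
  simp only [Algebra.algebraMap_eq_smul_one]
  simp only [add_mul, mul_add, smul_mul_assoc, mul_smul_comm, mul_one, one_mul,
    smul_smul, smul_add]
  rw [h]
  match_scalars <;> (field_simp; try ring; try simp [← mul_pow, mul_inv_cancel₀ hu, mul_inv_cancel₀ (pow_ne_zero 5 hu)])

lemma gquad_add (hu : u ≠ 0) {E : A} (h : E * E = (-(u + u⁻¹)) • E) :
    (E + CC u⁻¹ - CC u⁻¹) * (E + CC u⁻¹ + CC u) = 0 := by
  simp only [Algebra.algebraMap_eq_smul_one]
  simp only [add_mul, mul_add, sub_mul, mul_sub, smul_mul_assoc, mul_smul_comm,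
    mul_one, one_mul, smul_smul, smul_add, smul_sub]
  rw [h]
  match_scalars <;> (field_simp; try ring; try simp [← mul_pow, mul_inv_cancel₀ hu, mul_inv_cancel₀ (pow_ne_zero 5 hu)])

lemma gbraid (hu : u ≠ 0) {E1 E2 : A} (h1 : E1 * E1 = (-(u + u⁻¹)) • E1)
    (h2 : E2 * E2 = (-(u + u⁻¹)) • E2)
    (h12 : E1 * E2 * E1 = E1) (h21 : E2 * E1 * E2 = E2) :
    (E1 + CC u⁻¹) * (E2 + CC u⁻¹) * (E1 + CC u⁻¹)
      = (E2 + CC u⁻¹) * (E1 + CC u⁻¹) * (E2 + CC u⁻¹) := by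
  simp only [Algebra.algebraMap_eq_smul_one]
  simp only [add_mul, mul_add, smul_mul_assoc, mul_smul_comm, mul_one, one_mul,
    smul_smul, smul_add]
  rw [h1, h2, h12, h21]
  match_scalars <;> (field_simp; try ring; try simp [← mul_pow, mul_inv_cancel₀ hu, mul_inv_cancel₀ (pow_ne_zero 5 hu)])

lemma gcomm_add {x y : A} (v w : ℂ) (h : x * y = y * x) :
    (x + CC v) * (y + CC w) = (y + CC w) * (x + CC v) := by
  simp only [Algebra.algebraMap_eq_smul_one]
  simp only [add_mul, mul_add, smul_mul_assoc, mul_smul_comm, mul_one, one_mul, smul_smul]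
  rw [h]; match_scalars <;> ring

lemma gcomm_sub {x y : A} (v w : ℂ) (h : x * y = y * x) :
    (x - CC v) * (y - CC w) = (y - CC w) * (x - CC v) := by
  simp only [Algebra.algebraMap_eq_smul_one]
  simp only [sub_mul, mul_sub, smul_mul_assoc, mul_smul_comm, mul_one, one_mul, smul_smul]
  rw [h]; match_scalars <;> ring

end Generic

/-! ### Relations in `TLe` and `H` -/

section Rels
variable (t4 : ℂ) (n : ℕ)

lemma Ee_sq (i : ZMod n) :
    Ee t4 n i * Ee t4 n i = (-(t4 ^ 2 + t4⁻¹ ^ 2)) • Ee t4 n i := by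
  have h := RingQuot.mkAlgHom_rel ℂ (TLerel.esq (t4 := t4) (n := n) i)
  simpa only [map_mul, map_smul, Ee] using h

lemma Ee_comm (i j : ZMod n) (h1 : i - j ≠ 1) (h2 : i - j ≠ -1) :
    Ee t4 n i * Ee t4 n j = Ee t4 n j * Ee t4 n i := by
  have h := RingQuot.mkAlgHom_rel ℂ (TLerel.comm (t4 := t4) (n := n) i j h1 h2)
  simpa only [map_mul, Ee] using h

lemma Ee_plus (i : ZMod n) : Ee t4 n i * Ee t4 n (i + 1) * Ee t4 n i = Ee t4 n i := by
  have h := RingQuot.mkAlgHom_rel ℂ (TLerel.eplus (t4 := t4) (n := n) i)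
  simpa only [map_mul, Ee] using h

lemma Ee_minus (i : ZMod n) : Ee t4 n i * Ee t4 n (i - 1) * Ee t4 n i = Ee t4 n i := by
  have h := RingQuot.mkAlgHom_rel ℂ (TLerel.eminus (t4 := t4) (n := n) i)
  simpa only [map_mul, Ee] using h

lemma Re_Ee (i : ZMod n) : Re t4 n * Ee t4 n i = Ee t4 n (i + 1) * Re t4 n := by
  have h := RingQuot.mkAlgHom_rel ℂ (TLerel.rer (t4 := t4) (n := n) i)
  simpa only [map_mul, Ee, Re] using h

lemma Re_Rie : Re t4 n * Rie t4 n = 1 := by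
  have h := RingQuot.mkAlgHom_rel ℂ (TLerel.rri (t4 := t4) (n := n))
  simpa only [map_mul, map_one, Re, Rie] using h

lemma Rie_Re : Rie t4 n * Re t4 n = 1 := by
  have h := RingQuot.mkAlgHom_rel ℂ (TLerel.rir (t4 := t4) (n := n))
  simpa only [map_mul, map_one, Re, Rie] using h

lemma Th_quad (i : ZMod n) :
    (Th t4 n i - algebraMap ℂ (H t4 n) (t4⁻¹ ^ 2)) *
      (Th t4 n i + algebraMap ℂ (H t4 n) (t4 ^ 2)) = 0 := by
  have h := RingQuot.mkAlgHom_rel ℂ (Hrel.quad (t4 := t4) (n := n) i)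
  simpa only [map_mul, map_sub, map_add, map_zero, AlgHom.commutes, Th] using h

lemma Th_comm (i j : ZMod n) (h1 : i - j ≠ 1) (h2 : i - j ≠ -1) :
    Th t4 n i * Th t4 n j = Th t4 n j * Th t4 n i := by
  have h := RingQuot.mkAlgHom_rel ℂ (Hrel.comm (t4 := t4) (n := n) i j h1 h2)
  simpa only [map_mul, Th] using h

lemma Th_braid (i : ZMod n) :
    Th t4 n i * Th t4 n (i + 1) * Th t4 n i
      = Th t4 n (i + 1) * Th t4 n i * Th t4 n (i + 1) := by
  have h := RingQuot.mkAlgHom_rel ℂ (Hrel.braid (t4 := t4) (n := n) i)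
  simpa only [map_mul, Th] using h

lemma Rh_Th (i : ZMod n) : Rh t4 n * Th t4 n i = Th t4 n (i + 1) * Rh t4 n := by
  have h := RingQuot.mkAlgHom_rel ℂ (Hrel.rT (t4 := t4) (n := n) i)
  simpa only [map_mul, Th, Rh] using h

lemma Rh_Rih : Rh t4 n * Rih t4 n = 1 := by
  have h := RingQuot.mkAlgHom_rel ℂ (Hrel.rri (t4 := t4) (n := n))
  simpa only [map_mul, map_one, Rh, Rih] using h

lemma Rih_Rh : Rih t4 n * Rh t4 n = 1 := by
  have h := RingQuot.mkAlgHom_rel ℂ (Hrel.rir (t4 := t4) (n := n))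
  simpa only [map_mul, map_one, Rh, Rih] using h

end Rels

/-! ### Extensionality for algebra maps out of `H` -/

lemma H_hom_ext {t4 : ℂ} {n : ℕ} {B : Type*} [Semiring B] [Algebra ℂ B]
    {f g : H t4 n →ₐ[ℂ] B}
    (hT : ∀ i, f (Th t4 n i) = g (Th t4 n i))
    (hr : f (Rh t4 n) = g (Rh t4 n)) (hri : f (Rih t4 n) = g (Rih t4 n)) : f = g := by
  apply RingQuot.ringQuot_ext'
  apply FreeAlgebra.hom_ext
  funext x
  cases x with
  | T i => exact hT i
  | r => exact hr
  | ri => exact hri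

/-! ### Construction of `ψ` -/

section Psi
variable (t4 : ℂ) (n : ℕ)

def psiGen : Hgen n → TLe t4 n
  | Hgen.T i => Ee t4 n i + algebraMap ℂ (TLe t4 n) (t4⁻¹ ^ 2)
  | Hgen.r => Re t4 n
  | Hgen.ri => Rie t4 n

def psiFree : FH n →ₐ[ℂ] TLe t4 n := FreeAlgebra.lift ℂ (psiGen t4 n)

@[simp] lemma psiFree_T (i : ZMod n) :
    psiFree t4 n (thf n i) = Ee t4 n i + algebraMap ℂ (TLe t4 n) (t4⁻¹ ^ 2) := by
  simp [psiFree, thf, psiGen]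

@[simp] lemma psiFree_r : psiFree t4 n (rhf n) = Re t4 n := by
  simp [psiFree, rhf, psiGen]

@[simp] lemma psiFree_ri : psiFree t4 n (rihf n) = Rie t4 n := by
  simp [psiFree, rihf, psiGen]

variable {t4} in
lemma psiFree_resp (ht4 : t4 ≠ 0) : ∀ ⦃x y⦄, Hrel t4 n x y →
    psiFree t4 n x = psiFree t4 n y := by
  have hu : (t4 ^ 2 : ℂ) ≠ 0 := pow_ne_zero _ ht4
  have hc : (t4⁻¹ ^ 2 : ℂ) = (t4 ^ 2)⁻¹ := inv_pow t4 2
  intro x y h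
  induction h with
  | quad i =>
      simp only [map_mul, map_sub, map_add, AlgHom.commutes, map_zero, psiFree_T]
      rw [hc]
      refine gquad_add hu ?_
      rw [← hc]
      exact Ee_sq t4 n i
  | comm i j h1 h2 =>
      simp only [map_mul, psiFree_T]
      exact gcomm_add _ _ (Ee_comm t4 n i j h1 h2)
  | braid i =>
      simp only [map_mul, psiFree_T]
      rw [hc]
      refine gbraid hu ?_ ?_ (Ee_plus t4 n i) ?_
      · rw [← hc]; exact Ee_sq t4 n i
      · rw [← hc]; exact Ee_sq t4 n (i + 1)
      · have h := Ee_minus t4 n (i + 1)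
        rwa [add_sub_cancel_right] at h
  | rT i =>
      simp only [map_mul, psiFree_T, psiFree_r]
      rw [mul_add, add_mul, Re_Ee]
      congr 1
      exact (Algebra.commutes _ _).symm
  | rri => simp only [map_mul, map_one, psiFree_r, psiFree_ri, Re_Rie]
  | rir => simp only [map_mul, map_one, psiFree_r, psiFree_ri, Rie_Re]

variable {t4} in
def psi (ht4 : t4 ≠ 0) : H t4 n →ₐ[ℂ] TLe t4 n :=
  RingQuot.liftAlgHom ℂ ⟨psiFree t4 n, psiFree_resp n ht4⟩

variable {t4} in
@[simp] lemma psi_T (ht4 : t4 ≠ 0) (i : ZMod n) :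
    psi n ht4 (Th t4 n i) = Ee t4 n i + algebraMap ℂ (TLe t4 n) (t4⁻¹ ^ 2) := by
  simp [psi, Th, RingQuot.liftAlgHom_mkAlgHom_apply]

variable {t4} in
@[simp] lemma psi_r (ht4 : t4 ≠ 0) : psi n ht4 (Rh t4 n) = Re t4 n := by
  simp [psi, Rh, RingQuot.liftAlgHom_mkAlgHom_apply]

variable {t4} in
@[simp] lemma psi_ri (ht4 : t4 ≠ 0) : psi n ht4 (Rih t4 n) = Rie t4 n := by
  simp [psi, Rih, RingQuot.liftAlgHom_mkAlgHom_apply]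

variable {t4} in
lemma psi_surj (ht4 : t4 ≠ 0) : Function.Surjective (psi (t4 := t4) n ht4) := by
  intro z
  obtain ⟨y, rfl⟩ := RingQuot.mkAlgHom_surjective ℂ (TLerel t4 n) z
  induction y using FreeAlgebra.induction with
  | grade0 r => exact ⟨algebraMap ℂ _ r, by simp⟩
  | grade1 x =>
      cases x with
      | e i =>
          refine ⟨Th t4 n i - algebraMap ℂ _ (t4⁻¹ ^ 2), ?_⟩
          rw [map_sub, psi_T, AlgHom.commutes, add_sub_cancel_right]
          rfl
      | r => exact ⟨Rh t4 n, psi_r n ht4⟩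
      | ri => exact ⟨Rih t4 n, psi_ri n ht4⟩
  | mul a b ha hb =>
      obtain ⟨a', ha'⟩ := ha; obtain ⟨b', hb'⟩ := hb
      exact ⟨a' * b', by rw [map_mul, map_mul, ha', hb']⟩
  | add a b ha hb =>
      obtain ⟨a', ha'⟩ := ha; obtain ⟨b', hb'⟩ := hb
      exact ⟨a' + b', by rw [map_add, map_add, ha', hb']⟩

variable {t4} in
lemma psi_cond (ht4 : t4 ≠ 0) : psiCond t4 n (psi n ht4) :=
  ⟨psi_surj n ht4, psi_r n ht4, psi_ri n ht4, fun i => psi_T n ht4 i⟩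

end Psi

/-! ### The two-sided ideal and the quotient map -/

section Kernel
variable (t4 : ℂ) (n : ℕ)

def genSet : Set (H t4 n) :=
  {y : H t4 n | ∃ i : ZMod n, y =
    Th t4 n i * Th t4 n (i + 1) * Th t4 n i
      - (t4⁻¹ ^ 2) • (Th t4 n i * Th t4 n (i + 1))
      - (t4⁻¹ ^ 2) • (Th t4 n (i + 1) * Th t4 n i)
      + (t4⁻¹ ^ 4) • Th t4 n i + (t4⁻¹ ^ 4) • Th t4 n (i + 1)
      - Cth t4 n (t4⁻¹ ^ 6)}

def Jideal : TwoSidedIdeal (H t4 n) := tsSpan (genSet t4 n)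

lemma algHom_smul {A B : Type*} [Ring A] [Ring B] [Algebra ℂ A] [Algebra ℂ B]
    (f : A →ₐ[ℂ] B) (c : ℂ) (x : A) : f (c • x) = c • f x := by
  rw [Algebra.smul_def, Algebra.smul_def, map_mul, f.commutes]

lemma mem_tsSpan_of_mem {R : Type*} [NonUnitalNonAssocRing R] {s : Set R} {x : R}
    (hx : x ∈ s) : x ∈ tsSpan s :=
  (TwoSidedIdeal.mem_sInf _).mpr fun _ hI => hI hx

lemma tsSpan_le {R : Type*} [NonUnitalNonAssocRing R] {s : Set R} {I : TwoSidedIdeal R}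
    (h : s ⊆ I) : tsSpan s ≤ I := sInf_le h

abbrev QH : Type := (Jideal t4 n).ringCon.Quotient

instance : Algebra ℂ (QH t4 n) :=
  { smul := fun c x => c • x
    algebraMap := (Jideal t4 n).ringCon.mk'.comp (algebraMap ℂ (H t4 n))
    commutes' := by
      intro r x
      refine Quot.inductionOn x fun a => ?_
      show (Jideal t4 n).ringCon.mk' (algebraMap ℂ (H t4 n) r) * (Jideal t4 n).ringCon.mk' a
        = (Jideal t4 n).ringCon.mk' a * (Jideal t4 n).ringCon.mk' (algebraMap ℂ (H t4 n) r)
      rw [← map_mul, ← map_mul, Algebra.commutes]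
    smul_def' := by
      intro r x
      refine Quot.inductionOn x fun a => ?_
      show (Jideal t4 n).ringCon.mk' (r • a)
        = (Jideal t4 n).ringCon.mk' (algebraMap ℂ (H t4 n) r) * (Jideal t4 n).ringCon.mk' a
      rw [← map_mul, Algebra.smul_def] }

def piQ : H t4 n →ₐ[ℂ] QH t4 n :=
  { (Jideal t4 n).ringCon.mk' with commutes' := fun _ => rfl }

lemma piQ_apply (x : H t4 n) : piQ t4 n x = (Jideal t4 n).ringCon.mk' x := rfl

lemma piQ_zero_iff (x : H t4 n) : piQ t4 n x = 0 ↔ x ∈ Jideal t4 n := by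
  have h0 : (0 : QH t4 n) = (Jideal t4 n).ringCon.mk' 0 := (map_zero _).symm
  rw [piQ_apply, h0]
  have heq : ∀ a b : H t4 n,
      (Jideal t4 n).ringCon.mk' a = (Jideal t4 n).ringCon.mk' b ↔
        (Jideal t4 n).ringCon a b := fun a b => RingCon.eq _
  rw [heq, TwoSidedIdeal.rel_iff, sub_zero]

/-! ### The reverse map `χ : TLe → H/J` -/

def chiGen : TLgen n → QH t4 n
  | TLgen.e i => piQ t4 n (Th t4 n i) - algebraMap ℂ (QH t4 n) (t4⁻¹ ^ 2)
  | TLgen.r => piQ t4 n (Rh t4 n)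
  | TLgen.ri => piQ t4 n (Rih t4 n)

def chiFree : FA n →ₐ[ℂ] QH t4 n := FreeAlgebra.lift ℂ (chiGen t4 n)

@[simp] lemma chiFree_e (i : ZMod n) :
    chiFree t4 n (ef n i) = piQ t4 n (Th t4 n i) - algebraMap ℂ (QH t4 n) (t4⁻¹ ^ 2) := by
  simp [chiFree, ef, chiGen]

@[simp] lemma chiFree_r : chiFree t4 n (rf n) = piQ t4 n (Rh t4 n) := by
  simp [chiFree, rf, chiGen]

@[simp] lemma chiFree_ri : chiFree t4 n (rif n) = piQ t4 n (Rih t4 n) := by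
  simp [chiFree, rif, chiGen]

variable {t4} in
lemma piQ_quad (ht4 : t4 ≠ 0) (i : ZMod n) :
    (piQ t4 n (Th t4 n i) - algebraMap ℂ (QH t4 n) ((t4 ^ 2)⁻¹)) *
      (piQ t4 n (Th t4 n i) + algebraMap ℂ (QH t4 n) (t4 ^ 2)) = 0 := by
  have h := congrArg (piQ t4 n) (Th_quad t4 n i)
  rw [map_mul, map_sub, map_add, map_zero, AlgHom.commutes, AlgHom.commutes] at h
  rwa [← inv_pow]

variable {t4} in
lemma piQ_gen_zero (ht4 : t4 ≠ 0) (i : ZMod n) :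
    piQ t4 n (Th t4 n i * Th t4 n (i + 1) * Th t4 n i
      - (t4⁻¹ ^ 2) • (Th t4 n i * Th t4 n (i + 1))
      - (t4⁻¹ ^ 2) • (Th t4 n (i + 1) * Th t4 n i)
      + (t4⁻¹ ^ 4) • Th t4 n i + (t4⁻¹ ^ 4) • Th t4 n (i + 1)
      - Cth t4 n (t4⁻¹ ^ 6)) = 0 := by
  rw [piQ_zero_iff]
  exact mem_tsSpan_of_mem ⟨i, rfl⟩

variable {t4} in
lemma chiFree_resp (ht4 : t4 ≠ 0) : ∀ ⦃x y⦄, TLerel t4 n x y →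
    chiFree t4 n x = chiFree t4 n y := by
  have hu : (t4 ^ 2 : ℂ) ≠ 0 := pow_ne_zero _ ht4
  have hc : (t4⁻¹ ^ 2 : ℂ) = (t4 ^ 2)⁻¹ := inv_pow t4 2
  have hc2 : ((t4 ^ 2)⁻¹ : ℂ) ^ 2 = t4⁻¹ ^ 4 := by rw [← hc]; ring
  have hc3 : ((t4 ^ 2)⁻¹ : ℂ) ^ 3 = t4⁻¹ ^ 6 := by rw [← hc]; ring
  intro x y h
  induction h with
  | esq i =>
      simp only [map_mul, algHom_smul, chiFree_e]
      rw [hc]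
      exact gsq_sub hu (gquad_sq hu (piQ_quad n ht4 i))
  | comm i j h1 h2 =>
      simp only [map_mul, chiFree_e]
      refine gcomm_sub _ _ ?_
      have h := congrArg (piQ t4 n) (Th_comm t4 n i j h1 h2)
      rwa [map_mul, map_mul] at h
  | eplus i =>
      simp only [map_mul, chiFree_e]
      rw [hc, ← sub_eq_zero]
      have key := gkey hu (U := piQ t4 n (Th t4 n (i + 1))) (gquad_sq hu (piQ_quad n ht4 i))
      rw [key]
      have hgen := piQ_gen_zero n ht4 i
      simp only [map_sub, map_add, map_mul, algHom_smul] at hgen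
      rw [show piQ t4 n (Cth t4 n (t4⁻¹ ^ 6)) = algebraMap ℂ (QH t4 n) (t4⁻¹ ^ 6) from
        AlgHom.commutes _ _] at hgen
      rw [hc2, hc3, ← hc]
      exact hgen
  | eminus i =>
      simp only [map_mul, chiFree_e]
      rw [hc, ← sub_eq_zero]
      have key := gkey hu (U := piQ t4 n (Th t4 n (i - 1))) (gquad_sq hu (piQ_quad n ht4 i))
      rw [key]
      have hgen := piQ_gen_zero n ht4 (i - 1)
      rw [sub_add_cancel] at hgen
      have hb := congrArg (piQ t4 n) (Th_braid t4 n (i - 1))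
      rw [sub_add_cancel] at hb
      simp only [map_mul] at hb
      simp only [map_sub, map_add, map_mul, algHom_smul] at hgen
      rw [hb] at hgen
      rw [show piQ t4 n (Cth t4 n (t4⁻¹ ^ 6)) = algebraMap ℂ (QH t4 n) (t4⁻¹ ^ 6) from
        AlgHom.commutes _ _] at hgen
      rw [hc2, hc3, ← hc]
      rw [← hgen]
      match_scalars <;> ring
  | rer i =>
      simp only [map_mul, chiFree_e, chiFree_r]
      rw [mul_sub, sub_mul]
      have h := congrArg (piQ t4 n) (Rh_Th t4 n i)
      rw [map_mul, map_mul] at h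
      rw [h]
      congr 1
      exact (Algebra.commutes _ _).symm
  | rri =>
      simp only [map_mul, map_one, chiFree_r, chiFree_ri]
      have h := congrArg (piQ t4 n) (Rh_Rih t4 n)
      rwa [map_mul, map_one] at h
  | rir =>
      simp only [map_mul, map_one, chiFree_r, chiFree_ri]
      have h := congrArg (piQ t4 n) (Rih_Rh t4 n)
      rwa [map_mul, map_one] at h

variable {t4} in
def chi (ht4 : t4 ≠ 0) : TLe t4 n →ₐ[ℂ] QH t4 n :=
  RingQuot.liftAlgHom ℂ ⟨chiFree t4 n, chiFree_resp n ht4⟩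

variable {t4} in
@[simp] lemma chi_e (ht4 : t4 ≠ 0) (i : ZMod n) :
    chi n ht4 (Ee t4 n i) = piQ t4 n (Th t4 n i) - algebraMap ℂ (QH t4 n) (t4⁻¹ ^ 2) := by
  simp [chi, Ee, RingQuot.liftAlgHom_mkAlgHom_apply]

variable {t4} in
@[simp] lemma chi_r (ht4 : t4 ≠ 0) : chi n ht4 (Re t4 n) = piQ t4 n (Rh t4 n) := by
  simp [chi, Re, RingQuot.liftAlgHom_mkAlgHom_apply]

variable {t4} in
@[simp] lemma chi_ri (ht4 : t4 ≠ 0) : chi n ht4 (Rie t4 n) = piQ t4 n (Rih t4 n) := by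
  simp [chi, Rie, RingQuot.liftAlgHom_mkAlgHom_apply]

end Kernel

/-- for `n ≥ 3` there is a unique surjective ℂ-algebra homomorphism
`ψ_n : H_n → TL_n^e` with `ψ_n(ρ^{±1}) = ρ^{±1}` and `ψ_n(T_i) = e_i + t^{-1/2}`;
its kernel is the two-sided ideal generated by the elements
`T_iT_{i+1}T_i − t^{-1/2}T_iT_{i+1} − t^{-1/2}T_{i+1}T_i + t^{-1}T_i + t^{-1}T_{i+1} − t^{-3/2}`. -/
theorem statement7 (t4 : ℂ) (ht4 : t4 ≠ 0) (n : ℕ) (hn : 3 ≤ n) :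
    (∃! f : H t4 n →ₐ[ℂ] TLe t4 n, psiCond t4 n f) ∧
    ∀ f : H t4 n →ₐ[ℂ] TLe t4 n, psiCond t4 n f →
      ∀ x : H t4 n, f x = 0 ↔ x ∈ tsSpan
        {y : H t4 n | ∃ i : ZMod n, y =
          Th t4 n i * Th t4 n (i + 1) * Th t4 n i
            - (t4⁻¹ ^ 2) • (Th t4 n i * Th t4 n (i + 1))
            - (t4⁻¹ ^ 2) • (Th t4 n (i + 1) * Th t4 n i)
            + (t4⁻¹ ^ 4) • Th t4 n i + (t4⁻¹ ^ 4) • Th t4 n (i + 1)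
            - Cth t4 n (t4⁻¹ ^ 6)} := by
  have hu : (t4 ^ 2 : ℂ) ≠ 0 := pow_ne_zero _ ht4
  have hc : (t4⁻¹ ^ 2 : ℂ) = (t4 ^ 2)⁻¹ := inv_pow t4 2
  have hc2 : ((t4 ^ 2)⁻¹ : ℂ) ^ 2 = t4⁻¹ ^ 4 := by rw [← hc]; ring
  have hc3 : ((t4 ^ 2)⁻¹ : ℂ) ^ 3 = t4⁻¹ ^ 6 := by rw [← hc]; ring
  constructor
  · exact ⟨psi n ht4, psi_cond n ht4, fun g hg => H_hom_ext
      (fun i => (hg.2.2.2 i).trans ((psi_cond n ht4).2.2.2 i).symm)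
      (hg.2.1.trans (psi_cond n ht4).2.1.symm)
      (hg.2.2.1.trans (psi_cond n ht4).2.2.1.symm)⟩
  · intro f hf x
    have fgen : ∀ y ∈ genSet t4 n, f y = 0 := by
      rintro y ⟨i, rfl⟩
      have hEsq : Ee t4 n i * Ee t4 n i = (-(t4 ^ 2 + (t4 ^ 2)⁻¹)) • Ee t4 n i := by
        rw [← hc]; exact Ee_sq t4 n i
      have key := gkey hu (U := Ee t4 n (i + 1) + algebraMap ℂ (TLe t4 n) ((t4 ^ 2)⁻¹))
        (gsq_add hu hEsq)
      simp only [add_sub_cancel_right] at key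
      rw [Ee_plus, sub_self] at key
      simp only [map_sub, map_add, map_mul, algHom_smul, hf.2.2.2 i, hf.2.2.2 (i + 1)]
      rw [show f (Cth t4 n (t4⁻¹ ^ 6)) = algebraMap ℂ (TLe t4 n) (t4⁻¹ ^ 6) from
        AlgHom.commutes _ _]
      rw [show Cte t4 n (t4⁻¹ ^ 2) = algebraMap ℂ (TLe t4 n) ((t4 ^ 2)⁻¹) from by
        rw [← hc]; rfl]
      rw [hc, ← hc2, ← hc3]
      exact key.symm
    have hsub : genSet t4 n ⊆ (TwoSidedIdeal.ker f : Set (H t4 n)) := by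
      intro y hy
      rw [SetLike.mem_coe]
      exact (TwoSidedIdeal.mem_ker f).mpr (fgen y hy)
    constructor
    · intro hfx
      have hcomp : (chi n ht4).comp f = piQ t4 n := by
        apply H_hom_ext
        · intro i
          rw [AlgHom.comp_apply, hf.2.2.2 i, map_add, chi_e]
          rw [show (chi n ht4) (Cte t4 n (t4⁻¹ ^ 2))
            = algebraMap ℂ (QH t4 n) (t4⁻¹ ^ 2) from AlgHom.commutes _ _]
          rw [sub_add_cancel]
        · rw [AlgHom.comp_apply, hf.2.1, chi_r]
        · rw [AlgHom.comp_apply, hf.2.2.1, chi_ri]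
      have hpx : piQ t4 n x = 0 := by
        rw [← hcomp, AlgHom.comp_apply, hfx, map_zero]
      exact (piQ_zero_iff t4 n x).mp hpx
    · intro hx
      have hle : Jideal t4 n ≤ TwoSidedIdeal.ker f := tsSpan_le hsub
      have hxk : x ∈ TwoSidedIdeal.ker f := (TwoSidedIdeal.le_iff.mp hle) hx
      exact (TwoSidedIdeal.mem_ker f).mp hxk

end SkeinTL
end
end

section
/- For n ≥ 3, each generator T_i of H_n is invertible, with inverse T_i^{-1} = T_i − t^{-1/2} + t^{1/2}, and there exists a unique unital ℂ-algebra homomorphism I_n^{ha} : H_n → H_{n+1} satisfying I_n^{ha}(T_i) = T_i for 1 ≤ i ≤ n-1, I_n^{ha}(T_n) = T_nT_{n+1}T_n^{-1}, and I_n^{ha}(ρ) = t^{-1/4}ρT_n^{-1}, I_n^{ha}(ρ^{-1}) = t^{1/4}T_nρ^{-1}. -/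
noncomputable section

namespace SkeinTL

/-- The defining conditions of the insertion map `I_n^{ha} : H_n → H_{n+1}`:
`T_i ↦ T_i` for `1 ≤ i ≤ n-1`, `T_n ↦ T_nT_{n+1}T_n^{-1}`, `ρ ↦ t^{-1/4}ρT_n^{-1}`
and `ρ⁻¹ ↦ t^{1/4}T_nρ⁻¹`, where `T_n^{-1} = T_n − t^{-1/2} + t^{1/2}`. -/
def InsHaCond (t4 : ℂ) (n : ℕ) (I : H t4 n →ₐ[ℂ] H t4 (n + 1)) : Prop :=
  (∀ i : ℕ, 1 ≤ i → i ≤ n - 1 →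
      I (Th t4 n (i : ZMod n)) = Th t4 (n + 1) (i : ZMod (n + 1))) ∧
  I (Th t4 n (n : ZMod n)) =
    Th t4 (n + 1) (n : ZMod (n + 1)) * Th t4 (n + 1) ((n + 1 : ℕ) : ZMod (n + 1)) *
      (Th t4 (n + 1) (n : ZMod (n + 1)) - Cth t4 (n + 1) (t4⁻¹ ^ 2) +
        Cth t4 (n + 1) (t4 ^ 2)) ∧
  I (Rh t4 n) = t4⁻¹ • (Rh t4 (n + 1) *
      (Th t4 (n + 1) (n : ZMod (n + 1)) - Cth t4 (n + 1) (t4⁻¹ ^ 2) +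
        Cth t4 (n + 1) (t4 ^ 2))) ∧
  I (Rih t4 n) = t4 • (Th t4 (n + 1) (n : ZMod (n + 1)) * Rih t4 (n + 1))

/-! ### Auxiliary ring lemmas -/

section RingLemmas
variable {A : Type*} [Ring A]

lemma invComm {a b bi : A} (h : a * b = b * a) (h1 : b * bi = 1) (h2 : bi * b = 1) :
    a * bi = bi * a := by
  calc a * bi = bi * b * (a * bi) := by rw [h2, one_mul]
    _ = bi * (b * a) * bi := by simp only [mul_assoc]
    _ = bi * (a * b) * bi := by rw [h]
    _ = bi * a * (b * bi) := by simp only [mul_assoc]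
    _ = bi * a := by rw [h1, mul_one]

lemma conjSub {b c bi p : A} (h1 : b * bi = 1) (hp : ∀ x, p * x = x * p) :
    b * (c - p) * bi = b * c * bi - p := by
  have : b * (c - p) * bi = b * c * bi - p * (b * bi) := by
    rw [mul_sub, sub_mul, ← hp b]
    simp only [mul_assoc]
  rw [this, h1, mul_one]

lemma conjAdd {b c bi p : A} (h1 : b * bi = 1) (hp : ∀ x, p * x = x * p) :
    b * (c + p) * bi = b * c * bi + p := by
  have : b * (c + p) * bi = b * c * bi + p * (b * bi) := by
    rw [mul_add, add_mul, ← hp b]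
    simp only [mul_assoc]
  rw [this, h1, mul_one]

lemma conjQuad {b c bi p q : A} (h1 : b * bi = 1) (h2 : bi * b = 1)
    (hp : ∀ x, p * x = x * p) (hq : ∀ x, q * x = x * q)
    (hc : (c - p) * (c + q) = 0) :
    (b * c * bi - p) * (b * c * bi + q) = 0 := by
  rw [← conjSub h1 hp, ← conjAdd h1 hq]
  calc b * (c - p) * bi * (b * (c + q) * bi)
      = b * ((c - p) * (bi * b) * (c + q)) * bi := by simp only [mul_assoc]
    _ = b * ((c - p) * (c + q)) * bi := by rw [h2, mul_one]
    _ = 0 := by rw [hc, mul_zero, zero_mul]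

lemma commConj {a b c bi : A} (hab : a * b = b * a) (hac : a * c = c * a)
    (h1 : b * bi = 1) (h2 : bi * b = 1) :
    a * (b * c * bi) = b * c * bi * a := by
  have habi : a * bi = bi * a := invComm hab h1 h2
  calc a * (b * c * bi) = b * (a * c) * bi := by
        rw [← mul_assoc, ← mul_assoc, hab]; simp only [mul_assoc]
    _ = b * c * (a * bi) := by rw [hac]; simp only [mul_assoc]
    _ = b * c * bi * a := by rw [habi, ← mul_assoc]

lemma conjEq {b c bi ci : A} (hbc : b * c * b = c * b * c)
    (h1 : b * bi = 1) (hci : ci * c = 1) :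
    b * c * bi = ci * (b * c) := by
  calc b * c * bi = ci * c * (b * c * bi) := by rw [hci, one_mul]
    _ = ci * (c * b * c) * bi := by simp only [mul_assoc]
    _ = ci * (b * c * b) * bi := by rw [hbc]
    _ = ci * (b * c) * (b * bi) := by simp only [mul_assoc]
    _ = ci * (b * c) := by rw [h1, mul_one]

lemma braidConj1 {a b c bi ci : A} (hab : a * b * a = b * a * b)
    (hbc : b * c * b = c * b * c) (hac : a * c = c * a)
    (hb1 : b * bi = 1) (hc1 : c * ci = 1) (hc2 : ci * c = 1) :
    a * (b * c * bi) * a = b * c * bi * a * (b * c * bi) := by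
  have haci : a * ci = ci * a := invComm hac hc1 hc2
  have he : b * c * bi = ci * (b * c) := conjEq hbc hb1 hc2
  rw [he]
  calc a * (ci * (b * c)) * a = ci * (a * b * a) * c := by
        rw [← mul_assoc, haci]; simp only [mul_assoc, ← hac]
    _ = ci * (b * (a * b)) * c := by rw [hab]; simp only [mul_assoc, hac]
    _ = ci * (b * c) * a * (ci * (b * c)) := by
        have h3 : ci * (b * c) * a * (ci * (b * c)) = ci * (b * (c * a * ci) * (b * c)) := by
          simp only [mul_assoc]
        rw [h3, ← hac]
        have h4 : a * c * ci = a := by rw [mul_assoc, hc1, mul_one]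
        rw [h4]
        simp only [mul_assoc]

lemma braidConj2 {a b c bi : A} (hab : a * b = b * a)
    (hac : a * c * a = c * a * c)
    (hb1 : b * bi = 1) (hb2 : bi * b = 1) :
    b * c * bi * a * (b * c * bi) = a * (b * c * bi) * a := by
  have habi : a * bi = bi * a := invComm hab hb1 hb2
  calc b * c * bi * a * (b * c * bi)
      = b * c * (bi * a * b) * (c * bi) := by simp only [mul_assoc]
    _ = b * c * (a * (bi * b)) * (c * bi) := by rw [← habi]; simp only [mul_assoc]
    _ = b * (c * a * c) * bi := by rw [hb2, mul_one]; simp only [mul_assoc]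
    _ = b * (a * c * a) * bi := by rw [hac]
    _ = a * b * c * (a * bi) := by rw [← mul_assoc, ← mul_assoc, ← hab]; simp only [mul_assoc]
    _ = a * (b * c * bi) * a := by rw [habi]; simp only [mul_assoc]

lemma rbiEq {r b c bi ci : A} (hrb : r * b = c * r) (hb1 : b * bi = 1) (hc2 : ci * c = 1) :
    r * bi = ci * r := by
  calc r * bi = ci * c * (r * bi) := by rw [hc2, one_mul]
    _ = ci * (c * r) * bi := by simp only [mul_assoc]
    _ = ci * (r * b) * bi := by rw [hrb]
    _ = ci * r * (b * bi) := by simp only [mul_assoc]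
    _ = ci * r := by rw [hb1, mul_one]

lemma rTCase1 {r a b c bi ci : A} (hra : r * a = b * r) (hrb : r * b = c * r)
    (hbc : b * c * b = c * b * c)
    (hb1 : b * bi = 1) (hc1 : c * ci = 1) (hc2 : ci * c = 1) :
    r * bi * a = b * c * bi * (r * bi) := by
  have hrbi : r * bi = ci * r := rbiEq hrb hb1 hc2
  have he : b * c * bi = ci * (b * c) := conjEq hbc hb1 hc2
  rw [hrbi, he]
  calc ci * r * a = ci * (b * r) := by rw [mul_assoc, hra]
    _ = ci * (b * (c * ci) * r) := by rw [hc1, mul_one]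
    _ = ci * (b * c) * (ci * r) := by simp only [mul_assoc]

lemma rTCase2 {r x y b bi : A} (hxb : x * b = b * x) (hrx : r * x = y * r)
    (hb1 : b * bi = 1) (hb2 : bi * b = 1) :
    r * bi * x = y * (r * bi) := by
  have hxbi : x * bi = bi * x := invComm hxb hb1 hb2
  calc r * bi * x = r * (x * bi) := by rw [mul_assoc, ← hxbi]
    _ = y * r * bi := by rw [← mul_assoc, hrx]
    _ = y * (r * bi) := by rw [mul_assoc]

lemma rTCase3 {r a b c bi : A} (hrc : r * c = a * r)
    (hb2 : bi * b = 1) :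
    r * bi * (b * c * bi) = a * (r * bi) := by
  calc r * bi * (b * c * bi) = r * (bi * b) * (c * bi) := by simp only [mul_assoc]
    _ = r * c * bi := by rw [hb2, mul_one, mul_assoc]
    _ = a * (r * bi) := by rw [hrc, mul_assoc]

end RingLemmas

/-! ### ZMod lemmas -/

section ZModLemmas
variable {N : ℕ} [NeZero N]

omit [NeZero N] in
lemma castSubNeOne {a b : ℕ} (ha : a < N) (hb : b < N) (h : a ≠ b + 1)
    (h' : ¬(a = 0 ∧ b + 1 = N)) : (a : ZMod N) - (b : ZMod N) ≠ 1 := by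
  intro heq
  have heq' : (a : ZMod N) = ((b + 1 : ℕ) : ZMod N) := by
    push_cast
    linear_combination heq
  rcases lt_or_eq_of_le (Nat.succ_le_of_lt hb) with hlt | hEq
  · have := congrArg ZMod.val heq'
    rw [ZMod.val_cast_of_lt ha, ZMod.val_cast_of_lt hlt] at this
    exact h this
  · have h0 : ((b + 1 : ℕ) : ZMod N) = 0 := by
      rw [show b + 1 = N from hEq]; exact ZMod.natCast_self N
    rw [h0] at heq'
    have := congrArg ZMod.val heq'
    rw [ZMod.val_cast_of_lt ha, ZMod.val_zero] at this
    exact h' ⟨this, hEq⟩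

omit [NeZero N] in
lemma castSubNeNegOne {a b : ℕ} (ha : a < N) (hb : b < N) (h : b ≠ a + 1)
    (h' : ¬(b = 0 ∧ a + 1 = N)) : (a : ZMod N) - (b : ZMod N) ≠ -1 := by
  intro heq
  apply castSubNeOne hb ha h h'
  have h5 : (b : ZMod N) - a = -((a : ZMod N) - b) := by ring
  rw [h5, heq, neg_neg]

lemma valCastEq (i : ZMod N) : ((i.val : ℕ) : ZMod N) = i :=
  ZMod.natCast_rightInverse i

lemma valAddOne {i : ZMod N} [Fact (1 < N)] (h : i.val + 1 < N) :
    (i + 1).val = i.val + 1 := by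
  rw [ZMod.val_add, ZMod.val_one, Nat.mod_eq_of_lt h]

end ZModLemmas

/-! ### Relations in `H t4 m` -/

def Tinvh (t4 : ℂ) (m : ℕ) (i : ZMod m) : H t4 m :=
  Th t4 m i - Cth t4 m (t4⁻¹ ^ 2) + Cth t4 m (t4 ^ 2)

section Rels
variable (t4 : ℂ) (m : ℕ)

lemma Cth_comm (c : ℂ) (x : H t4 m) : Cth t4 m c * x = x * Cth t4 m c :=
  Algebra.commutes c x

lemma relQuad0 (i : ZMod m) :
    (Th t4 m i - Cth t4 m (t4⁻¹ ^ 2)) * (Th t4 m i + Cth t4 m (t4 ^ 2)) = 0 := by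
  have h := RingQuot.mkAlgHom_rel ℂ (Hrel.quad (t4 := t4) (n := m) i)
  simpa [Th, Cth, map_mul, map_sub, map_add] using h

lemma relComm {i j : ZMod m} (h1 : i - j ≠ 1) (h2 : i - j ≠ -1) :
    Th t4 m i * Th t4 m j = Th t4 m j * Th t4 m i := by
  have h := RingQuot.mkAlgHom_rel ℂ (Hrel.comm (t4 := t4) (n := m) i j h1 h2)
  simpa [Th, map_mul] using h

lemma relBraid (i : ZMod m) :
    Th t4 m i * Th t4 m (i + 1) * Th t4 m i
      = Th t4 m (i + 1) * Th t4 m i * Th t4 m (i + 1) := by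
  have h := RingQuot.mkAlgHom_rel ℂ (Hrel.braid (t4 := t4) (n := m) i)
  simpa [Th, map_mul] using h

lemma relRT (i : ZMod m) :
    Rh t4 m * Th t4 m i = Th t4 m (i + 1) * Rh t4 m := by
  have h := RingQuot.mkAlgHom_rel ℂ (Hrel.rT (t4 := t4) (n := m) i)
  simpa [Th, Rh, map_mul] using h

lemma relRri : Rh t4 m * Rih t4 m = 1 := by
  have h := RingQuot.mkAlgHom_rel ℂ (Hrel.rri (t4 := t4) (n := m))
  simpa [Rh, Rih, map_mul] using h

lemma relRir : Rih t4 m * Rh t4 m = 1 := by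
  have h := RingQuot.mkAlgHom_rel ℂ (Hrel.rir (t4 := t4) (n := m))
  simpa [Rh, Rih, map_mul] using h

variable {t4}

lemma cpq (ht4 : t4 ≠ 0) : Cth t4 m (t4⁻¹ ^ 2) * Cth t4 m (t4 ^ 2) = 1 := by
  rw [Cth, Cth, ← map_mul]
  have h5 : t4⁻¹ ^ 2 * t4 ^ 2 = 1 := by field_simp
  rw [h5, map_one]

lemma Th_mul_Tinvh (ht4 : t4 ≠ 0) (i : ZMod m) :
    Th t4 m i * Tinvh t4 m i = 1 := by
  have hp : Cth t4 m (t4⁻¹ ^ 2) * Th t4 m i = Th t4 m i * Cth t4 m (t4⁻¹ ^ 2) :=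
    Algebra.commutes _ _
  have key : Th t4 m i * Tinvh t4 m i
      = (Th t4 m i - Cth t4 m (t4⁻¹ ^ 2)) * (Th t4 m i + Cth t4 m (t4 ^ 2))
        + Cth t4 m (t4⁻¹ ^ 2) * Cth t4 m (t4 ^ 2) := by
    rw [Tinvh]
    simp only [mul_add, mul_sub, add_mul, sub_mul, hp]
    abel
  rw [key, relQuad0, zero_add, cpq m ht4]

lemma Tinvh_mul_Th (ht4 : t4 ≠ 0) (i : ZMod m) :
    Tinvh t4 m i * Th t4 m i = 1 := by
  have hp : Cth t4 m (t4⁻¹ ^ 2) * Th t4 m i = Th t4 m i * Cth t4 m (t4⁻¹ ^ 2) :=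
    Algebra.commutes _ _
  have hq : Cth t4 m (t4 ^ 2) * Th t4 m i = Th t4 m i * Cth t4 m (t4 ^ 2) :=
    Algebra.commutes _ _
  have key : Tinvh t4 m i * Th t4 m i
      = (Th t4 m i - Cth t4 m (t4⁻¹ ^ 2)) * (Th t4 m i + Cth t4 m (t4 ^ 2))
        + Cth t4 m (t4⁻¹ ^ 2) * Cth t4 m (t4 ^ 2) := by
    rw [Tinvh]
    simp only [mul_add, mul_sub, add_mul, sub_mul, hp, hq]
    abel
  rw [key, relQuad0, zero_add, cpq m ht4]

lemma commNat {a b : ℕ} (ha : a < m) (hb : b < m)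
    (h1 : a ≠ b + 1) (h1' : ¬(a = 0 ∧ b + 1 = m)) (h2 : b ≠ a + 1)
    (h2' : ¬(b = 0 ∧ a + 1 = m)) :
    Th t4 m (a : ZMod m) * Th t4 m (b : ZMod m)
      = Th t4 m (b : ZMod m) * Th t4 m (a : ZMod m) :=
  relComm t4 m (castSubNeOne ha hb h1 h1') (castSubNeNegOne ha hb h2 h2')

end Rels

/-! ### The insertion map -/

def fgen (t4 : ℂ) (n : ℕ) : Hgen n → H t4 (n + 1)
  | .T i => if i = 0 then
      Th t4 (n + 1) ((n : ℕ) : ZMod (n + 1)) * Th t4 (n + 1) ((n + 1 : ℕ) : ZMod (n + 1)) *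
        Tinvh t4 (n + 1) ((n : ℕ) : ZMod (n + 1))
    else Th t4 (n + 1) ((i.val : ℕ) : ZMod (n + 1))
  | .r => t4⁻¹ • (Rh t4 (n + 1) * Tinvh t4 (n + 1) ((n : ℕ) : ZMod (n + 1)))
  | .ri => t4 • (Th t4 (n + 1) ((n : ℕ) : ZMod (n + 1)) * Rih t4 (n + 1))

def Fha (t4 : ℂ) (n : ℕ) : FH n →ₐ[ℂ] H t4 (n + 1) :=
  FreeAlgebra.lift ℂ (fgen t4 n)

lemma Fha_thf (t4 : ℂ) (n : ℕ) (i : ZMod n) :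
    Fha t4 n (thf n i) = fgen t4 n (Hgen.T i) :=
  FreeAlgebra.lift_ι_apply _ _

lemma Fha_rhf (t4 : ℂ) (n : ℕ) : Fha t4 n (rhf n) = fgen t4 n Hgen.r :=
  FreeAlgebra.lift_ι_apply _ _

lemma Fha_rihf (t4 : ℂ) (n : ℕ) : Fha t4 n (rihf n) = fgen t4 n Hgen.ri :=
  FreeAlgebra.lift_ι_apply _ _

theorem Fha_rel (t4 : ℂ) (ht4 : t4 ≠ 0) (n : ℕ) (hn : 3 ≤ n) :
    ∀ ⦃x y : FH n⦄, Hrel t4 n x y → Fha t4 n x = Fha t4 n y := by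
  haveI : NeZero n := ⟨by omega⟩
  haveI : Fact (1 < n) := ⟨by omega⟩
  set N := n + 1 with hN
  -- basic objects in H t4 N
  set B := Th t4 N ((n : ℕ) : ZMod N) with hB
  set C := Th t4 N ((N : ℕ) : ZMod N) with hC
  set Bi := Tinvh t4 N ((n : ℕ) : ZMod N) with hBi
  set Ci := Tinvh t4 N ((N : ℕ) : ZMod N) with hCi
  have hB1 : B * Bi = 1 := Th_mul_Tinvh N ht4 _
  have hB2 : Bi * B = 1 := Tinvh_mul_Th N ht4 _
  have hC1 : C * Ci = 1 := Th_mul_Tinvh N ht4 _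
  have hC2 : Ci * C = 1 := Tinvh_mul_Th N ht4 _
  -- index rewrites
  have hC0 : ((N : ℕ) : ZMod N) = ((0 : ℕ) : ZMod N) := by
    rw [ZMod.natCast_self, Nat.cast_zero]
  have e1 : ((n - 1 : ℕ) : ZMod N) + 1 = ((n : ℕ) : ZMod N) := by
    conv_rhs => rw [show (n : ℕ) = n - 1 + 1 by omega]
    rw [Nat.cast_add, Nat.cast_one]
  have e2 : ((n : ℕ) : ZMod N) + 1 = ((N : ℕ) : ZMod N) := by
    rw [show (N : ℕ) = n + 1 from rfl, Nat.cast_add, Nat.cast_one]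
  have e3 : ((0 : ℕ) : ZMod N) + 1 = ((1 : ℕ) : ZMod N) := by
    rw [Nat.cast_zero, Nat.cast_one, zero_add]
  have e4 : ((N : ℕ) : ZMod N) + 1 = ((1 : ℕ) : ZMod N) := by
    rw [hC0, e3]
  -- braid relations
  have hbraidBC : B * C * B = C * B * C := by
    have h := relBraid t4 N ((n : ℕ) : ZMod N)
    rw [e2] at h; exact h
  -- val facts for i ≠ 0
  have hval_lt : ∀ i : ZMod n, i.val < n := fun i => ZMod.val_lt i
  have hval_ne : ∀ i : ZMod n, i ≠ 0 → i.val ≠ 0 := fun i hi hv =>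
    hi ((ZMod.val_eq_zero i).mp hv)
  have hvalm1 : ∀ i : ZMod n, i = -1 → i.val = n - 1 := by
    intro i hi
    have hc : ((n - 1 : ℕ) : ZMod n) = -1 := by
      rw [Nat.cast_sub (by omega), Nat.cast_one, ZMod.natCast_self]; ring
    rw [hi, ← hc, ZMod.val_cast_of_lt (by omega)]
  have hvalne1 : ∀ i : ZMod n, i + 1 ≠ 0 → i.val + 1 < n := by
    intro i hi
    rcases Nat.lt_or_ge (i.val + 1) n with h | h
    · exact h
    · exfalso
      have hlt := ZMod.val_lt i
      have : i.val = n - 1 := by omega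
      apply hi
      have : i = -1 := by
        rw [← valCastEq i, this, Nat.cast_sub (by omega), Nat.cast_one, ZMod.natCast_self]
        ring
      rw [this]; ring
  -- e(i+1) = e(i) + 1 when i + 1 ≠ 0
  have headd : ∀ i : ZMod n, i + 1 ≠ 0 →
      (((i + 1).val : ℕ) : ZMod N) = ((i.val : ℕ) : ZMod N) + 1 := by
    intro i hi
    rw [valAddOne (by have := hvalne1 i hi; omega), Nat.cast_add, Nat.cast_one]
  -- adjacency transfer from ZMod n
  have hAdjNe : ∀ i j : ZMod n, i - j ≠ 1 → i.val ≠ j.val + 1 := by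
    intro i j h1 h
    apply h1
    have := congrArg (fun a : ℕ => (a : ZMod n)) h
    simp only [Nat.cast_add, Nat.cast_one, valCastEq] at this
    rw [this]; ring
  -- commutation of Th (e j) with both B and C when 2 ≤ j.val ≤ n - 2
  have hcommB : ∀ a : ℕ, a < N → a ≠ 0 → a ≠ n - 1 →
      Th t4 N (a : ZMod N) * B = B * Th t4 N (a : ZMod N) := by
    intro a ha h0 h1
    exact commNat N (by omega) (by omega) (by omega) (by omega) (by omega) (by omega)
  have hcommC : ∀ a : ℕ, a < N → a ≠ 1 → a ≠ n →
      Th t4 N (a : ZMod N) * C = C * Th t4 N (a : ZMod N) := by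
    intro a ha h1 h2
    rw [hC, hC0]
    exact commNat N (by omega) (by omega) (by omega) (by omega) (by omega) (by omega)
  intro x y h
  induction h with
  | quad i =>
    simp only [map_mul, map_sub, map_add, map_zero, AlgHom.commutes, Fha_thf]
    by_cases hi : i = 0
    · simp only [fgen, hi, if_pos rfl]
      exact conjQuad hB1 hB2 (fun x => Algebra.commutes _ x) (fun x => Algebra.commutes _ x)
        (relQuad0 t4 N _)
    · simp only [fgen, if_neg hi]
      exact relQuad0 t4 N _
  | comm i j h1 h2 =>
    simp only [map_mul, Fha_thf]
    by_cases hi : i = 0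
    · by_cases hj : j = 0
      · rw [hi, hj]
      · -- j.val ∉ {0, 1, n-1}
        have hj1 : j ≠ 1 := by
          intro h; apply h2; rw [hi, h]; ring
        have hjm1 : j ≠ -1 := by
          intro h; apply h1; rw [hi, h]; ring
        have hv0 : j.val ≠ 0 := hval_ne j hj
        have hv1 : j.val ≠ 1 := by
          intro h; apply hj1; rw [← valCastEq j, h, Nat.cast_one]
        have hvm : j.val ≠ n - 1 := by
          intro h
          apply hjm1
          rw [← valCastEq j, h, Nat.cast_sub (by omega), Nat.cast_one, ZMod.natCast_self]
          ring
        simp only [fgen, hi, if_pos rfl, if_neg hj]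
        exact (commConj
          (hcommB j.val (by have := hval_lt j; omega) hv0 hvm)
          (hcommC j.val (by have := hval_lt j; omega) hv1 (by have := hval_lt j; omega))
          hB1 hB2).symm
    · by_cases hj : j = 0
      · have hi1 : i ≠ 1 := by
          intro h; apply h1; rw [hj, h]; ring
        have him1 : i ≠ -1 := by
          intro h; apply h2; rw [hj, h]; ring
        have hv0 : i.val ≠ 0 := hval_ne i hi
        have hv1 : i.val ≠ 1 := by
          intro h; apply hi1; rw [← valCastEq i, h, Nat.cast_one]
        have hvm : i.val ≠ n - 1 := by
          intro h
          apply him1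
          rw [← valCastEq i, h, Nat.cast_sub (by omega), Nat.cast_one, ZMod.natCast_self]
          ring
        simp only [fgen, hj, if_pos rfl, if_neg hi]
        exact commConj
          (hcommB i.val (by have := hval_lt i; omega) hv0 hvm)
          (hcommC i.val (by have := hval_lt i; omega) hv1 (by have := hval_lt i; omega))
          hB1 hB2
      · simp only [fgen, if_neg hi, if_neg hj]
        have hij : i.val ≠ j.val + 1 := hAdjNe i j h1
        have hji : j.val ≠ i.val + 1 := by
          apply hAdjNe j i
          intro h; apply h2
          have : i - j = -(j - i) := by ring
          rw [this, h]
        exact commNat N (by have := hval_lt i; omega) (by have := hval_lt j; omega)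
          hij (by have := hval_ne i hi; omega) hji (by have := hval_ne j hj; omega)
  | braid i =>
    simp only [map_mul, Fha_thf]
    by_cases hi : i = 0
    · -- i = 0 : X a X = a X a with a = Th 1
      have h10 : i + 1 ≠ 0 := by
        rw [hi, zero_add]
        intro h
        have := congrArg ZMod.val h
        rw [ZMod.val_one, ZMod.val_zero] at this
        omega
      have hval1 : (i + 1).val = 1 := by rw [hi, zero_add, ZMod.val_one]
      simp only [fgen, if_pos hi, if_neg h10, hval1, Nat.cast_one]
      have hab : Th t4 N ((1 : ℕ) : ZMod N) * B = B * Th t4 N ((1 : ℕ) : ZMod N) :=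
        hcommB 1 (by omega) (by omega) (by omega)
      have hac : Th t4 N ((1 : ℕ) : ZMod N) * C * Th t4 N ((1 : ℕ) : ZMod N)
          = C * Th t4 N ((1 : ℕ) : ZMod N) * C := by
        have h := relBraid t4 N ((0 : ℕ) : ZMod N)
        rw [e3] at h
        rw [hC, hC0]
        exact h.symm
      rw [Nat.cast_one] at hab hac
      exact braidConj2 hab hac hB1 hB2
    · by_cases hi1 : i + 1 = 0
      · -- i = -1 : a X a = X a X with a = Th (n-1)
        have him : i = -1 := eq_neg_of_add_eq_zero_left hi1
        have hv : i.val = n - 1 := hvalm1 i him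
        have hab : Th t4 N ((n - 1 : ℕ) : ZMod N) * B * Th t4 N ((n - 1 : ℕ) : ZMod N)
            = B * Th t4 N ((n - 1 : ℕ) : ZMod N) * B := by
          have h := relBraid t4 N ((n - 1 : ℕ) : ZMod N)
          rw [e1] at h; exact h
        have hac : Th t4 N ((n - 1 : ℕ) : ZMod N) * C = C * Th t4 N ((n - 1 : ℕ) : ZMod N) :=
          hcommC (n - 1) (by omega) (by omega) (by omega)
        simp only [fgen, if_neg hi, if_pos hi1, hv]
        exact braidConj1 hab hbraidBC hac hB1 hC1 hC2
      · -- generic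
        have he : (((i + 1).val : ℕ) : ZMod N) = ((i.val : ℕ) : ZMod N) + 1 := headd i hi1
        simp only [fgen, if_neg hi, if_neg hi1, he]
        exact relBraid t4 N _
  | rT i =>
    simp only [map_mul, Fha_thf, Fha_rhf]
    simp only [fgen]
    rw [smul_mul_assoc, mul_smul_comm]
    congr 1
    by_cases hi : i = 0
    · have h10 : i + 1 ≠ 0 := by
        rw [hi, zero_add]
        intro h
        have := congrArg ZMod.val h
        rw [ZMod.val_one, ZMod.val_zero] at this
        omega
      have hval1 : (i + 1).val = 1 := by rw [hi, zero_add, ZMod.val_one]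
      rw [if_pos hi, if_neg h10, hval1]
      have hrc : Rh t4 N * C = Th t4 N ((1 : ℕ) : ZMod N) * Rh t4 N := by
        have h := relRT t4 N ((N : ℕ) : ZMod N)
        rw [e4] at h; exact h
      exact rTCase3 hrc hB2
    · by_cases hi1 : i + 1 = 0
      · have him : i = -1 := eq_neg_of_add_eq_zero_left hi1
        have hv : i.val = n - 1 := hvalm1 i him
        rw [if_neg hi, if_pos hi1, hv]
        have hra : Rh t4 N * Th t4 N ((n - 1 : ℕ) : ZMod N) = B * Rh t4 N := by
          have h := relRT t4 N ((n - 1 : ℕ) : ZMod N)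
          rw [e1] at h; exact h
        have hrb : Rh t4 N * B = C * Rh t4 N := by
          have h := relRT t4 N ((n : ℕ) : ZMod N)
          rw [e2] at h; exact h
        exact rTCase1 hra hrb hbraidBC hB1 hC1 hC2
      · rw [if_neg hi, if_neg hi1, headd i hi1]
        have hxb : Th t4 N ((i.val : ℕ) : ZMod N) * B = B * Th t4 N ((i.val : ℕ) : ZMod N) :=
          hcommB i.val (by have := hval_lt i; omega) (hval_ne i hi)
            (by have := hvalne1 i hi1; omega)
        exact rTCase2 hxb (relRT t4 N _) hB1 hB2
  | rri =>
    simp only [map_mul, map_one, Fha_rhf, Fha_rihf]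
    simp only [fgen]
    rw [smul_mul_assoc, mul_smul_comm, smul_smul, inv_mul_cancel₀ ht4, one_smul]
    calc Rh t4 N * Bi * (B * Rih t4 N) = Rh t4 N * (Bi * B) * Rih t4 N := by
          simp only [mul_assoc]
      _ = 1 := by rw [hB2, mul_one, relRri]
  | rir =>
    simp only [map_mul, map_one, Fha_rhf, Fha_rihf]
    simp only [fgen]
    rw [smul_mul_assoc, mul_smul_comm, smul_smul, mul_inv_cancel₀ ht4, one_smul]
    calc B * Rih t4 N * (Rh t4 N * Bi) = B * (Rih t4 N * Rh t4 N) * Bi := by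
          simp only [mul_assoc]
      _ = 1 := by rw [relRir, mul_one, hB1]

/-- for `n ≥ 3`, every generator `T_i` of `H_n` is invertible with
inverse `T_i − t^{-1/2} + t^{1/2}`, and there is a unique unital ℂ-algebra
homomorphism `I_n^{ha} : H_n → H_{n+1}` with the insertion values. -/
theorem statement8 (t4 : ℂ) (ht4 : t4 ≠ 0) (n : ℕ) (hn : 3 ≤ n) :
    (∀ i : ZMod n,
      Th t4 n i * (Th t4 n i - Cth t4 n (t4⁻¹ ^ 2) + Cth t4 n (t4 ^ 2)) = 1 ∧
      (Th t4 n i - Cth t4 n (t4⁻¹ ^ 2) + Cth t4 n (t4 ^ 2)) * Th t4 n i = 1) ∧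
    ∃! I : H t4 n →ₐ[ℂ] H t4 (n + 1), InsHaCond t4 n I := by
  haveI : NeZero n := ⟨by omega⟩
  haveI : Fact (1 < n) := ⟨by omega⟩
  constructor
  · intro i
    exact ⟨Th_mul_Tinvh n ht4 i, Tinvh_mul_Th n ht4 i⟩
  · set I0 : H t4 n →ₐ[ℂ] H t4 (n + 1) :=
      RingQuot.liftAlgHom ℂ ⟨Fha t4 n, Fha_rel t4 ht4 n hn⟩ with hI0
    have happ : ∀ x : FH n, I0 (RingQuot.mkAlgHom ℂ (Hrel t4 n) x) = Fha t4 n x :=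
      fun x => RingQuot.liftAlgHom_mkAlgHom_apply _ _ _ _
    have hcond : InsHaCond t4 n I0 := by
      refine ⟨?_, ?_, ?_, ?_⟩
      · intro i h1 h2
        have hiv : ((i : ZMod n)) ≠ 0 := by
          intro h
          have := congrArg ZMod.val h
          rw [ZMod.val_cast_of_lt (by omega), ZMod.val_zero] at this
          omega
        rw [Th, happ, Fha_thf]
        simp only [fgen, if_neg hiv]
        rw [ZMod.val_cast_of_lt (by omega)]
      · rw [Th, happ, Fha_thf]
        simp [fgen, ZMod.natCast_self, Tinvh]
      · rw [Rh, happ, Fha_rhf]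
        simp [fgen, Tinvh]
      · rw [Rih, happ, Fha_rihf]
        simp [fgen]
    have huniq : ∀ J K : H t4 n →ₐ[ℂ] H t4 (n + 1),
        InsHaCond t4 n J → InsHaCond t4 n K → J = K := by
      intro J K hJ hK
      apply RingQuot.ringQuot_ext'
      apply FreeAlgebra.hom_ext
      funext g
      cases g with
      | T i =>
        show J (Th t4 n i) = K (Th t4 n i)
        by_cases hi : i = 0
        · have h0 : (n : ZMod n) = 0 := ZMod.natCast_self n
          rw [hi, ← h0, hJ.2.1, hK.2.1]
        · have hio : i = ((i.val : ℕ) : ZMod n) := (valCastEq i).symm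
          have h1 : 1 ≤ i.val :=
            Nat.one_le_iff_ne_zero.mpr (fun h => hi ((ZMod.val_eq_zero i).mp h))
          have h2 : i.val ≤ n - 1 := by have := ZMod.val_lt i; omega
          rw [hio, hJ.1 i.val h1 h2, hK.1 i.val h1 h2]
      | r =>
        show J (Rh t4 n) = K (Rh t4 n)
        rw [hJ.2.2.1, hK.2.2.1]
      | ri =>
        show J (Rih t4 n) = K (Rih t4 n)
        rw [hJ.2.2.2, hK.2.2.2]
    exact ⟨I0, hcond, fun J hJ => huniq J I0 hJ hcond⟩

end SkeinTL
end
end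

section
/- For n ≥ 3 there exists a unique group homomorphism I_n^{br} : B_n → B_{n+1} satisfying I_n^{br}(σ_i) = σ_i for 1 ≤ i ≤ n-1, I_n^{br}(σ_n) = σ_nσ_{n+1}σ_n^{-1}, and I_n^{br}(ρ̃) = ρ̃σ_n^{-1}. -/
noncomputable section

namespace SkeinTL

/-- Generators of the extended affine braid group: `s i` (`i : ZMod n`, the σᵢ with
indices mod `n`) and `p` (= ρ̃). -/
inductive BGen (n : ℕ) : Type
  | s : ZMod n → BGen n
  | p : BGen n

def fσ (n : ℕ) (i : ZMod n) : FreeGroup (BGen n) := FreeGroup.of (BGen.s i)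
def fρ (n : ℕ) : FreeGroup (BGen n) := FreeGroup.of (BGen.p : BGen n)

/-- The relator set of the extended affine braid group `B_n` (indices mod `n`):
`σᵢσⱼ = σⱼσᵢ` if `i - j ≠ ±1`; `σᵢσ_{i+1}σᵢ = σ_{i+1}σᵢσ_{i+1}`; `ρ̃σᵢ = σ_{i+1}ρ̃`. -/
def Brels (n : ℕ) : Set (FreeGroup (BGen n)) :=
  {w | (∃ i j : ZMod n, i - j ≠ 1 ∧ i - j ≠ -1 ∧
          w = fσ n i * fσ n j * (fσ n i)⁻¹ * (fσ n j)⁻¹) ∨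
       (∃ i : ZMod n,
          w = fσ n i * fσ n (i + 1) * fσ n i *
            (fσ n (i + 1))⁻¹ * (fσ n i)⁻¹ * (fσ n (i + 1))⁻¹) ∨
       (∃ i : ZMod n, w = fρ n * fσ n i * (fρ n)⁻¹ * (fσ n (i + 1))⁻¹)}

/-- The extended affine braid group `B_n`. -/
abbrev B (n : ℕ) : Type := PresentedGroup (Brels n)

/-- The generator `σ_i` of the extended affine braid group (index mod `n`). -/
def σB (n : ℕ) (i : ZMod n) : B n := PresentedGroup.of (BGen.s i)

/-- The generator `ρ̃` of the extended affine braid group. -/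
def ρB (n : ℕ) : B n := PresentedGroup.of (BGen.p : BGen n)

/-- The defining conditions of the insertion map `I_n^{br} : B_n → B_{n+1}`:
`σ_i ↦ σ_i` (`1 ≤ i ≤ n-1`), `σ_n ↦ σ_nσ_{n+1}σ_n⁻¹`, `ρ̃ ↦ ρ̃σ_n⁻¹`. -/
def InsBrCond (n : ℕ) (φ : B n →* B (n + 1)) : Prop :=
  (∀ i : ℕ, 1 ≤ i → i ≤ n - 1 →
      φ (σB n (i : ZMod n)) = σB (n + 1) (i : ZMod (n + 1))) ∧
  φ (σB n (n : ZMod n)) =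
    σB (n + 1) (n : ZMod (n + 1)) * σB (n + 1) ((n + 1 : ℕ) : ZMod (n + 1)) *
      (σB (n + 1) (n : ZMod (n + 1)))⁻¹ ∧
  φ (ρB n) = ρB (n + 1) * (σB (n + 1) (n : ZMod (n + 1)))⁻¹

-- auxiliary lemmas

lemma relator_one (m : ℕ) {r : FreeGroup (BGen m)} (h : r ∈ Brels m) :
    PresentedGroup.mk (Brels m) r = 1 :=
  (QuotientGroup.eq_one_iff r).mpr (Subgroup.subset_normalClosure h)

lemma comm_σ (m : ℕ) (a b : ZMod m) (h1 : a - b ≠ 1) (h2 : a - b ≠ -1) :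
    σB m a * σB m b = σB m b * σB m a := by
  have hmem : (fσ m a * fσ m b * (fσ m a)⁻¹ * (fσ m b)⁻¹) ∈ Brels m :=
    Or.inl ⟨a, b, h1, h2, rfl⟩
  have h := relator_one m hmem
  rw [map_mul, map_mul, map_mul, map_inv, map_inv, mul_inv_eq_one,
    mul_inv_eq_iff_eq_mul] at h
  exact h

lemma braid_σ (m : ℕ) (a : ZMod m) :
    σB m a * σB m (a + 1) * σB m a = σB m (a + 1) * σB m a * σB m (a + 1) := by
  have hmem : (fσ m a * fσ m (a + 1) * fσ m a *
      (fσ m (a + 1))⁻¹ * (fσ m a)⁻¹ * (fσ m (a + 1))⁻¹) ∈ Brels m :=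
    Or.inr (Or.inl ⟨a, rfl⟩)
  have h := relator_one m hmem
  simp only [map_mul, map_inv] at h
  rw [mul_inv_eq_one, mul_inv_eq_iff_eq_mul, mul_inv_eq_iff_eq_mul] at h
  exact h

lemma ρ_conj (m : ℕ) (a : ZMod m) :
    ρB m * σB m a * (ρB m)⁻¹ = σB m (a + 1) := by
  have hmem : (fρ m * fσ m a * (fρ m)⁻¹ * (fσ m (a + 1))⁻¹) ∈ Brels m :=
    Or.inr (Or.inr ⟨a, rfl⟩)
  have h := relator_one m hmem
  simp only [map_mul, map_inv] at h
  rw [mul_inv_eq_one] at h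
  exact h


section AuxArith
lemma natCast_inj_zmod {m a b : ℕ} (ha : a < m) (hb : b < m) (h : (a : ZMod m) = b) : a = b := by
  have := (ZMod.natCast_eq_natCast_iff' a b m).mp h
  rwa [Nat.mod_eq_of_lt ha, Nat.mod_eq_of_lt hb] at this

lemma sub_eq_one_iff {m a b : ℕ} (ha : a < m) (hb : b < m) :
    (a : ZMod m) - (b : ZMod m) = 1 ↔ (a = b + 1 ∨ a + m = b + 1) := by
  rw [sub_eq_iff_eq_add, show (1 : ZMod m) + (b : ZMod m) = ((b + 1 : ℕ) : ZMod m) by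
    push_cast; ring, ZMod.natCast_eq_natCast_iff', Nat.mod_eq_of_lt ha]
  rcases Nat.lt_or_ge (b + 1) m with h | h
  · rw [Nat.mod_eq_of_lt h]; omega
  · have hbm : b + 1 = m := by omega
    rw [hbm, Nat.mod_self]; omega

-- abstract group lemmas
variable {G : Type*} [Group G]

lemma comm_conj (x s0 sn : G) (h0 : x * s0 = s0 * x) (hn : x * sn = sn * x) :
    x * (sn * s0 * sn⁻¹) = (sn * s0 * sn⁻¹) * x := by
  have hn' : Commute x sn := hn
  have h0' : Commute x s0 := h0
  exact (hn'.mul_right h0').mul_right hn'.inv_right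

lemma braid_conj1 (s0 s1 sn : G)
    (c : s1 * sn = sn * s1) (b : s0 * s1 * s0 = s1 * s0 * s1) :
    (sn * s0 * sn⁻¹) * s1 * (sn * s0 * sn⁻¹) = s1 * (sn * s0 * sn⁻¹) * s1 := by
  have hc : sn⁻¹ * s1 * sn = s1 := by
    calc sn⁻¹ * s1 * sn = sn⁻¹ * (s1 * sn) := by group
      _ = sn⁻¹ * (sn * s1) := by rw [c]
      _ = s1 := by group
  have hc2 : s1 * sn⁻¹ = sn⁻¹ * s1 := by
    calc s1 * sn⁻¹ = sn⁻¹ * (sn * s1) * sn⁻¹ := by group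
      _ = sn⁻¹ * (s1 * sn) * sn⁻¹ := by rw [c]
      _ = sn⁻¹ * s1 := by group
  calc (sn * s0 * sn⁻¹) * s1 * (sn * s0 * sn⁻¹)
      = sn * s0 * (sn⁻¹ * s1 * sn) * s0 * sn⁻¹ := by group
    _ = sn * s0 * s1 * s0 * sn⁻¹ := by rw [hc]
    _ = sn * (s0 * s1 * s0) * sn⁻¹ := by group
    _ = sn * (s1 * s0 * s1) * sn⁻¹ := by rw [b]
    _ = (sn * s1) * s0 * (s1 * sn⁻¹) := by group
    _ = (s1 * sn) * s0 * (sn⁻¹ * s1) := by rw [← c, hc2]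
    _ = s1 * (sn * s0 * sn⁻¹) * s1 := by group

lemma braid_conj2 (s0 sm sn : G)
    (c : sm * s0 = s0 * sm) (bm : sm * sn * sm = sn * sm * sn)
    (b2 : sn * s0 * sn = s0 * sn * s0) :
    sm * (sn * s0 * sn⁻¹) * sm = (sn * s0 * sn⁻¹) * sm * (sn * s0 * sn⁻¹) := by
  have ht : sn * s0 * sn⁻¹ = s0⁻¹ * sn * s0 := by
    calc sn * s0 * sn⁻¹ = s0⁻¹ * (s0 * sn * s0) * sn⁻¹ := by group
      _ = s0⁻¹ * (sn * s0 * sn) * sn⁻¹ := by rw [← b2]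
      _ = s0⁻¹ * sn * s0 := by group
  rw [ht]
  have c' : sm * s0⁻¹ = s0⁻¹ * sm := by
    calc sm * s0⁻¹ = s0⁻¹ * (s0 * sm) * s0⁻¹ := by group
      _ = s0⁻¹ * (sm * s0) * s0⁻¹ := by rw [← c]
      _ = s0⁻¹ * sm := by group
  calc sm * (s0⁻¹ * sn * s0) * sm = (sm * s0⁻¹) * sn * (s0 * sm) := by group
    _ = (s0⁻¹ * sm) * sn * (sm * s0) := by rw [c', ← c]
    _ = s0⁻¹ * (sm * sn * sm) * s0 := by group
    _ = s0⁻¹ * (sn * sm * sn) * s0 := by rw [bm]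
    _ = s0⁻¹ * sn * (sm * s0) * (s0⁻¹ * sn * s0) := by group
    _ = s0⁻¹ * sn * (s0 * sm) * (s0⁻¹ * sn * s0) := by rw [c]
    _ = (s0⁻¹ * sn * s0) * sm * (s0⁻¹ * sn * s0) := by group

lemma rho_conj0 (s0 s1 sn r : G) (p0 : r * s0 * r⁻¹ = s1) :
    (r * sn⁻¹) * (sn * s0 * sn⁻¹) * (r * sn⁻¹)⁻¹ = s1 := by
  rw [← p0]; group

lemma rho_conjF (sa sb sn r : G) (c : sa * sn = sn * sa) (pa : r * sa * r⁻¹ = sb) :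
    (r * sn⁻¹) * sa * (r * sn⁻¹)⁻¹ = sb := by
  have h : sn⁻¹ * sa * sn = sa := by
    calc sn⁻¹ * sa * sn = sn⁻¹ * (sa * sn) := by group
      _ = sn⁻¹ * (sn * sa) := by rw [c]
      _ = sa := by group
  calc (r * sn⁻¹) * sa * (r * sn⁻¹)⁻¹ = r * (sn⁻¹ * sa * sn) * r⁻¹ := by group
    _ = r * sa * r⁻¹ := by rw [h]
    _ = sb := pa

lemma rho_conjE (s0 sm sn r : G)
    (bm : sm * sn * sm = sn * sm * sn) (pm : r * sm * r⁻¹ = sn) (pn : r * sn * r⁻¹ = s0) :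
    (r * sn⁻¹) * sm * (r * sn⁻¹)⁻¹ = sn * s0 * sn⁻¹ := by
  have h : sn⁻¹ * sm * sn = sm * sn * sm⁻¹ := by
    calc sn⁻¹ * sm * sn = sn⁻¹ * (sm * sn * sm) * sm⁻¹ := by group
      _ = sn⁻¹ * (sn * sm * sn) * sm⁻¹ := by rw [bm]
      _ = sm * sn * sm⁻¹ := by group
  calc (r * sn⁻¹) * sm * (r * sn⁻¹)⁻¹ = r * (sn⁻¹ * sm * sn) * r⁻¹ := by group
    _ = r * (sm * sn * sm⁻¹) * r⁻¹ := by rw [h]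
    _ = (r * sm * r⁻¹) * (r * sn * r⁻¹) * (r * sm * r⁻¹)⁻¹ := by group
    _ = sn * s0 * sn⁻¹ := by rw [pm, pn]

end AuxArith

-- nat-indexed lemmas in B (n+1)

lemma S_comm {n : ℕ} (a b : ℕ) (ha : a < n + 1) (hb : b < n + 1)
    (h1 : a ≠ b + 1) (h2 : b ≠ a + 1) (h3 : a + (n + 1) ≠ b + 1) (h4 : b + (n + 1) ≠ a + 1) :
    σB (n+1) (a : ZMod (n+1)) * σB (n+1) (b : ZMod (n+1)) =
      σB (n+1) (b : ZMod (n+1)) * σB (n+1) (a : ZMod (n+1)) := by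
  refine comm_σ (n+1) _ _ (fun h => ?_) (fun h => ?_)
  · rcases (sub_eq_one_iff ha hb).mp h with h | h <;> omega
  · have h' : (b : ZMod (n+1)) - (a : ZMod (n+1)) = 1 := by linear_combination -h
    rcases (sub_eq_one_iff hb ha).mp h' with h | h <;> omega

lemma S_braid (n : ℕ) (a : ℕ) :
    σB (n+1) (a : ZMod (n+1)) * σB (n+1) ((a+1 : ℕ) : ZMod (n+1)) * σB (n+1) (a : ZMod (n+1)) =
      σB (n+1) ((a+1 : ℕ) : ZMod (n+1)) * σB (n+1) (a : ZMod (n+1)) *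
        σB (n+1) ((a+1 : ℕ) : ZMod (n+1)) := by
  have := braid_σ (n+1) (a : ZMod (n+1))
  rwa [show ((a : ZMod (n+1)) + 1) = ((a+1 : ℕ) : ZMod (n+1)) by push_cast; ring] at this

lemma S_wrap (n : ℕ) : σB (n+1) ((n+1 : ℕ) : ZMod (n+1)) = σB (n+1) ((0 : ℕ) : ZMod (n+1)) := by
  rw [ZMod.natCast_self, Nat.cast_zero]

lemma S_bwrap (n : ℕ) :
    σB (n+1) ((n : ℕ) : ZMod (n+1)) * σB (n+1) ((0 : ℕ) : ZMod (n+1)) * σB (n+1) ((n : ℕ) : ZMod (n+1)) =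
      σB (n+1) ((0 : ℕ) : ZMod (n+1)) * σB (n+1) ((n : ℕ) : ZMod (n+1)) *
        σB (n+1) ((0 : ℕ) : ZMod (n+1)) := by
  have := S_braid n n
  rwa [S_wrap] at this

lemma S_rho (n a : ℕ) :
    ρB (n+1) * σB (n+1) (a : ZMod (n+1)) * (ρB (n+1))⁻¹ = σB (n+1) ((a+1 : ℕ) : ZMod (n+1)) := by
  have := ρ_conj (n+1) (a : ZMod (n+1))
  rwa [show ((a : ZMod (n+1)) + 1) = ((a+1 : ℕ) : ZMod (n+1)) by push_cast; ring] at this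

-- insertion map on generators

def insFun (n : ℕ) : BGen n → B (n + 1)
  | .s i => if i = 0 then
      σB (n+1) ((n : ℕ) : ZMod (n+1)) * σB (n+1) ((0 : ℕ) : ZMod (n+1)) *
        (σB (n+1) ((n : ℕ) : ZMod (n+1)))⁻¹
    else σB (n+1) ((i.val : ℕ) : ZMod (n+1))
  | .p => ρB (n+1) * (σB (n+1) ((n : ℕ) : ZMod (n+1)))⁻¹

lemma insFun_zero (n : ℕ) : insFun n (BGen.s (0 : ZMod n)) =
    σB (n+1) ((n : ℕ) : ZMod (n+1)) * σB (n+1) ((0 : ℕ) : ZMod (n+1)) *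
      (σB (n+1) ((n : ℕ) : ZMod (n+1)))⁻¹ := by
  simp [insFun]

lemma insFun_cast {n a : ℕ} (h1 : 1 ≤ a) (h2 : a < n) :
    insFun n (BGen.s ((a : ℕ) : ZMod n)) = σB (n+1) ((a : ℕ) : ZMod (n+1)) := by
  have hne : ((a : ℕ) : ZMod n) ≠ 0 := by
    intro h
    rw [show (0 : ZMod n) = ((0 : ℕ) : ZMod n) by norm_num] at h
    have := natCast_inj_zmod h2 (by omega) h
    omega
  simp only [insFun, if_neg hne, ZMod.val_cast_of_lt h2]

lemma insFun_p (n : ℕ) : insFun n BGen.p = ρB (n+1) * (σB (n+1) ((n : ℕ) : ZMod (n+1)))⁻¹ := rfl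

lemma lift_rels (n : ℕ) (hn : 3 ≤ n) : ∀ r ∈ Brels n, FreeGroup.lift (insFun n) r = 1 := by
  haveI : NeZero n := ⟨by omega⟩
  intro r hr
  rcases hr with ⟨i, j, h1, h2, rfl⟩ | ⟨i, rfl⟩ | ⟨i, rfl⟩
  · -- commutation
    simp only [fσ, map_mul, map_inv, FreeGroup.lift_apply_of]
    rw [mul_inv_eq_one, mul_inv_eq_iff_eq_mul]
    obtain ⟨a, ha, rfl⟩ : ∃ a : ℕ, a < n ∧ ((a : ℕ) : ZMod n) = i :=
      ⟨i.val, i.val_lt, ZMod.natCast_zmod_val i⟩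
    obtain ⟨b, hb, rfl⟩ : ∃ b : ℕ, b < n ∧ ((b : ℕ) : ZMod n) = j :=
      ⟨j.val, j.val_lt, ZMod.natCast_zmod_val j⟩
    have H1 : ¬(a = b + 1 ∨ a + n = b + 1) := fun h => h1 ((sub_eq_one_iff ha hb).mpr h)
    have H2 : ¬(b = a + 1 ∨ b + n = a + 1) := fun h => h2 (by
      have h' := (sub_eq_one_iff hb ha).mpr h
      linear_combination -h')
    push_neg at H1 H2
    rcases Nat.eq_zero_or_pos a with rfl | hapos <;> rcases Nat.eq_zero_or_pos b with rfl | hbpos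
    · rfl
    · rw [show ((0 : ℕ) : ZMod n) = (0 : ZMod n) from Nat.cast_zero, insFun_zero,
        insFun_cast hbpos hb]
      exact (comm_conj _ _ _
        (S_comm b 0 (by omega) (by omega) (by omega) (by omega) (by omega) (by omega))
        (S_comm b n (by omega) (by omega) (by omega) (by omega) (by omega) (by omega))).symm
    · rw [show ((0 : ℕ) : ZMod n) = (0 : ZMod n) from Nat.cast_zero, insFun_zero,
        insFun_cast hapos ha]
      exact comm_conj _ _ _
        (S_comm a 0 (by omega) (by omega) (by omega) (by omega) (by omega) (by omega))
        (S_comm a n (by omega) (by omega) (by omega) (by omega) (by omega) (by omega))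
    · rw [insFun_cast hapos ha, insFun_cast hbpos hb]
      exact S_comm a b (by omega) (by omega) (by omega) (by omega) (by omega) (by omega)
  · -- braid
    simp only [fσ, map_mul, map_inv, FreeGroup.lift_apply_of]
    rw [mul_inv_eq_one, mul_inv_eq_iff_eq_mul, mul_inv_eq_iff_eq_mul]
    obtain ⟨a, ha, rfl⟩ : ∃ a : ℕ, a < n ∧ ((a : ℕ) : ZMod n) = i :=
      ⟨i.val, i.val_lt, ZMod.natCast_zmod_val i⟩
    by_cases ha0 : a = 0
    · subst ha0
      rw [show (((0 : ℕ) : ZMod n) + 1) = ((1 : ℕ) : ZMod n) by push_cast; ring,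
        show ((0 : ℕ) : ZMod n) = (0 : ZMod n) from Nat.cast_zero, insFun_zero,
        insFun_cast (le_refl 1) (by omega)]
      exact braid_conj1 _ _ _
        (S_comm 1 n (by omega) (by omega) (by omega) (by omega) (by omega) (by omega))
        (by simpa using S_braid n 0)
    by_cases han : a = n - 1
    · subst han
      rw [show (((n - 1 : ℕ) : ZMod n) + 1) = (0 : ZMod n) by
          rw [show (((n - 1 : ℕ) : ZMod n) + 1) = ((n - 1 + 1 : ℕ) : ZMod n) by push_cast; ring,
            Nat.sub_add_cancel (by omega), ZMod.natCast_self],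
        insFun_zero, insFun_cast (by omega) (by omega)]
      exact braid_conj2 _ _ _
        (S_comm (n-1) 0 (by omega) (by omega) (by omega) (by omega) (by omega) (by omega))
        (by have := S_braid n (n-1); rwa [Nat.sub_add_cancel (by omega)] at this)
        (S_bwrap n)
    · rw [show (((a : ℕ) : ZMod n) + 1) = ((a + 1 : ℕ) : ZMod n) by push_cast; ring,
        insFun_cast (by omega) ha, insFun_cast (by omega) (by omega)]
      exact S_braid n a
  · -- rho
    simp only [fσ, fρ, map_mul, map_inv, FreeGroup.lift_apply_of]
    rw [mul_inv_eq_one]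
    obtain ⟨a, ha, rfl⟩ : ∃ a : ℕ, a < n ∧ ((a : ℕ) : ZMod n) = i :=
      ⟨i.val, i.val_lt, ZMod.natCast_zmod_val i⟩
    rw [insFun_p]
    by_cases ha0 : a = 0
    · subst ha0
      rw [show (((0 : ℕ) : ZMod n) + 1) = ((1 : ℕ) : ZMod n) by push_cast; ring,
        show ((0 : ℕ) : ZMod n) = (0 : ZMod n) from Nat.cast_zero, insFun_zero,
        insFun_cast (le_refl 1) (by omega)]
      exact rho_conj0 _ _ _ _ (by simpa using S_rho n 0)
    by_cases han : a = n - 1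
    · subst han
      rw [show (((n - 1 : ℕ) : ZMod n) + 1) = (0 : ZMod n) by
          rw [show (((n - 1 : ℕ) : ZMod n) + 1) = ((n - 1 + 1 : ℕ) : ZMod n) by push_cast; ring,
            Nat.sub_add_cancel (by omega), ZMod.natCast_self],
        insFun_zero, insFun_cast (by omega) (by omega)]
      exact rho_conjE _ _ _ _
        (by have := S_braid n (n-1); rwa [Nat.sub_add_cancel (by omega)] at this)
        (by have := S_rho n (n-1); rwa [Nat.sub_add_cancel (by omega)] at this)
        (by have := S_rho n n; rwa [S_wrap n] at this)
    · rw [show (((a : ℕ) : ZMod n) + 1) = ((a + 1 : ℕ) : ZMod n) by push_cast; ring,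
        insFun_cast (by omega) ha, insFun_cast (by omega) (by omega)]
      exact rho_conjF _ _ _ _
        (S_comm a n (by omega) (by omega) (by omega) (by omega) (by omega) (by omega))
        (S_rho n a)

lemma insCond_unique (n : ℕ) (hn : 3 ≤ n) (φ ψ : B n →* B (n+1))
    (hφ : InsBrCond n φ) (hψ : InsBrCond n ψ) : φ = ψ := by
  haveI : NeZero n := ⟨by omega⟩
  apply PresentedGroup.ext
  intro x
  cases x with
  | p => show φ (ρB n) = ψ (ρB n); rw [hφ.2.2, hψ.2.2]
  | s i =>
    show φ (σB n i) = ψ (σB n i)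
    by_cases h0 : i = 0
    · subst h0
      rw [show (0 : ZMod n) = ((n : ℕ) : ZMod n) from (ZMod.natCast_self n).symm,
        hφ.2.1, hψ.2.1]
    · have h1 : 1 ≤ i.val := Nat.pos_of_ne_zero fun h => h0 ((ZMod.val_eq_zero i).mp h)
      have h2 : i.val ≤ n - 1 := by have := i.val_lt; omega
      rw [← ZMod.natCast_zmod_val i, hφ.1 i.val h1 h2, hψ.1 i.val h1 h2]


/-- for `n ≥ 3` there is a unique group homomorphism
`I_n^{br} : B_n → B_{n+1}` with `σ_i ↦ σ_i` (`1 ≤ i ≤ n-1`),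
`σ_n ↦ σ_nσ_{n+1}σ_n⁻¹` and `ρ̃ ↦ ρ̃σ_n⁻¹`. -/
theorem statement9 (n : ℕ) (hn : 3 ≤ n) :
    ∃! φ : B n →* B (n + 1), InsBrCond n φ := by
  have hcond : InsBrCond n (PresentedGroup.toGroup (lift_rels n hn)) := by
    refine ⟨fun i hi1 hi2 => ?_, ?_, ?_⟩
    · show PresentedGroup.toGroup _ (PresentedGroup.of (BGen.s ((i : ℕ) : ZMod n))) = _
      rw [PresentedGroup.toGroup.of, insFun_cast hi1 (by omega)]
    · rw [show ((n : ℕ) : ZMod n) = (0 : ZMod n) from ZMod.natCast_self n]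
      show PresentedGroup.toGroup _ (PresentedGroup.of (BGen.s (0 : ZMod n))) = _
      rw [PresentedGroup.toGroup.of, insFun_zero, ← S_wrap n]
    · show PresentedGroup.toGroup _ (PresentedGroup.of (BGen.p : BGen n)) = _
      rw [PresentedGroup.toGroup.of, insFun_p]
  exact ⟨_, hcond, fun ψ hψ => insCond_unique n hn ψ _ hψ hcond⟩

end SkeinTL
end
end

section
/- For n ≥ 3 one has μ_{n+1} ∘ I_n^{br} = I_n ∘ μ_n as ℂ-algebra homomorphisms ℂ[B_n] → TL_{n+1}, where I_n^{br} is extended ℂ-linearly to the group algebras. -/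
noncomputable section

namespace SkeinTL

/-- The defining relations of the extended affine Temperley-Lieb algebra.
For `n = 2` the presentation is the special one (`ρ²e₁ = e₁`), for `n ≥ 3` the
general one (indices mod `n`). -/
inductive TLrel (t4 : ℂ) (n : ℕ) : FA n → FA n → Prop
  | esq (i : ZMod n) :
      TLrel t4 n (ef n i * ef n i) ((-(t4 ^ 2 + t4⁻¹ ^ 2)) • ef n i)
  | rer (i : ZMod n) :
      TLrel t4 n (rf n * ef n i) (ef n (i + 1) * rf n)
  | rri : TLrel t4 n (rf n * rif n) 1
  | rir : TLrel t4 n (rif n * rf n) 1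
  | comm (h : 3 ≤ n) (i j : ZMod n) (h1 : i - j ≠ 1) (h2 : i - j ≠ -1) :
      TLrel t4 n (ef n i * ef n j) (ef n j * ef n i)
  | eplus (h : 3 ≤ n) (i : ZMod n) :
      TLrel t4 n (ef n i * ef n (i + 1) * ef n i) (ef n i)
  | eminus (h : 3 ≤ n) (i : ZMod n) :
      TLrel t4 n (ef n i * ef n (i - 1) * ef n i) (ef n i)
  | cyc (h : 3 ≤ n) :
      TLrel t4 n ((rf n * ef n 1) ^ (n - 1)) (rf n ^ n * (rf n * ef n 1))
  | two (h : n = 2) :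
      TLrel t4 n (rf n * rf n * ef n 1) (ef n 1)

/-- The extended affine Temperley-Lieb algebra `TL_n` (for `n ≥ 2`). -/
abbrev TL (t4 : ℂ) (n : ℕ) : Type := RingQuot (TLrel t4 n)

/-- The generator `e_i` of `TL_n` (index mod `n`). -/
def E (t4 : ℂ) (n : ℕ) (i : ZMod n) : TL t4 n :=
  RingQuot.mkAlgHom ℂ (TLrel t4 n) (ef n i)

/-- The generator `ρ` of `TL_n`. -/
def R (t4 : ℂ) (n : ℕ) : TL t4 n :=
  RingQuot.mkAlgHom ℂ (TLrel t4 n) (rf n)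

/-- The generator `ρ⁻¹` of `TL_n`. -/
def Ri (t4 : ℂ) (n : ℕ) : TL t4 n :=
  RingQuot.mkAlgHom ℂ (TLrel t4 n) (rif n)

/-- The scalar `c` viewed in `TL_n`. -/
def Ct (t4 : ℂ) (n : ℕ) (c : ℂ) : TL t4 n := algebraMap ℂ (TL t4 n) c


/-- The defining conditions of the arc-insertion algebra map `I_n : TL_n → TL_{n+1}`
(`n ≥ 2`): `I_n(e_i) = e_i` for `1 ≤ i ≤ n-1`,
`I_n(e_n) = (t^{1/4}e_n + t^{-1/4})e_{n+1}(t^{-1/4}e_n + t^{1/4})`,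
`I_n(ρ) = ρ(t^{-1/4}e_n + t^{1/4})`, `I_n(ρ⁻¹) = (t^{1/4}e_n + t^{-1/4})ρ⁻¹`. -/
def InsCond (t4 : ℂ) (n : ℕ) (I : TL t4 n →ₐ[ℂ] TL t4 (n + 1)) : Prop :=
  (∀ i : ℕ, 1 ≤ i → i ≤ n - 1 →
      I (E t4 n (i : ZMod n)) = E t4 (n + 1) (i : ZMod (n + 1))) ∧
  I (E t4 n (n : ZMod n)) =
    (t4 • E t4 (n + 1) (n : ZMod (n + 1)) + Ct t4 (n + 1) t4⁻¹) *
      E t4 (n + 1) ((n + 1 : ℕ) : ZMod (n + 1)) *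
      (t4⁻¹ • E t4 (n + 1) (n : ZMod (n + 1)) + Ct t4 (n + 1) t4) ∧
  I (R t4 n) = R t4 (n + 1) * (t4⁻¹ • E t4 (n + 1) (n : ZMod (n + 1)) + Ct t4 (n + 1) t4) ∧
  I (Ri t4 n) = (t4 • E t4 (n + 1) (n : ZMod (n + 1)) + Ct t4 (n + 1) t4⁻¹) * Ri t4 (n + 1)

/-- The defining conditions of `μ_n : ℂ[B_n] → TL_n`: `σ_i ↦ t^{1/4}e_i + t^{-1/4}`
and `ρ̃ ↦ ρ`. -/
def muCond (t4 : ℂ) (n : ℕ) (μ : MonoidAlgebra ℂ (B n) →ₐ[ℂ] TL t4 n) : Prop :=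
  (∀ i : ZMod n,
      μ (MonoidAlgebra.of ℂ (B n) (σB n i)) = t4 • E t4 n i + Ct t4 n t4⁻¹) ∧
  μ (MonoidAlgebra.of ℂ (B n) (ρB n)) = R t4 n


section Helpers

variable {t4 : ℂ} {m : ℕ}

lemma E_sq (j : ZMod m) :
    E t4 m j * E t4 m j = (-(t4 ^ 2 + t4⁻¹ ^ 2)) • E t4 m j := by
  have h := RingQuot.mkAlgHom_rel ℂ (TLrel.esq (t4 := t4) (n := m) j)
  simpa [E, map_mul, map_smul] using h

lemma Ct_eq (c : ℂ) : Ct t4 m c = c • (1 : TL t4 m) :=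
  Algebra.algebraMap_eq_smul_one c

set_option linter.unnecessarySeqFocus false in
lemma AB_eq_one (ht4 : t4 ≠ 0) (j : ZMod m) :
    (t4 • E t4 m j + Ct t4 m t4⁻¹) * (t4⁻¹ • E t4 m j + Ct t4 m t4) = 1 := by
  rw [Ct_eq, Ct_eq]
  simp only [mul_add, add_mul, smul_mul_assoc, mul_smul_comm, smul_smul, one_mul, mul_one,
    E_sq]
  match_scalars <;> field_simp <;> ring

set_option linter.unnecessarySeqFocus false in
lemma BA_eq_one (ht4 : t4 ≠ 0) (j : ZMod m) :
    (t4⁻¹ • E t4 m j + Ct t4 m t4) * (t4 • E t4 m j + Ct t4 m t4⁻¹) = 1 := by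
  rw [Ct_eq, Ct_eq]
  simp only [mul_add, add_mul, smul_mul_assoc, mul_smul_comm, smul_smul, one_mul, mul_one,
    E_sq]
  match_scalars <;> field_simp <;> ring

lemma mu_of_inv (ht4 : t4 ≠ 0) (μ : MonoidAlgebra ℂ (B m) →ₐ[ℂ] TL t4 m)
    (hμ : muCond t4 m μ) (j : ZMod m) :
    μ (MonoidAlgebra.of ℂ (B m) (σB m j)⁻¹) = t4⁻¹ • E t4 m j + Ct t4 m t4 := by
  have h1 : μ (MonoidAlgebra.of ℂ (B m) (σB m j)) *
      μ (MonoidAlgebra.of ℂ (B m) (σB m j)⁻¹) = 1 := by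
    rw [← map_mul, ← map_mul, mul_inv_cancel, map_one, map_one]
  have h2 : (t4⁻¹ • E t4 m j + Ct t4 m t4) * μ (MonoidAlgebra.of ℂ (B m) (σB m j)) = 1 := by
    rw [hμ.1]; exact BA_eq_one ht4 j
  exact (left_inv_eq_right_inv h2 h1).symm

lemma conj_lemma (A Bb e' : TL t4 m) (hAB : A * Bb = 1) :
    A * (t4 • e' + Ct t4 m t4⁻¹) * Bb = t4 • (A * e' * Bb) + Ct t4 m t4⁻¹ := by
  rw [Ct_eq, mul_add, mul_smul_comm, mul_smul_comm, mul_one, add_mul, smul_mul_assoc,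
    smul_mul_assoc, hAB]

lemma monoidHom_inv_eq {G M : Type*} [Group G] [Monoid M] (f g : G →* M) (x : G)
    (h : f x = g x) : f x⁻¹ = g x⁻¹ := by
  have h1 : f x⁻¹ * g x = 1 := by rw [← h, ← map_mul, inv_mul_cancel, map_one]
  have h2 : g x * g x⁻¹ = 1 := by rw [← map_mul, mul_inv_cancel, map_one]
  exact left_inv_eq_right_inv h1 h2

end Helpers

/-- for `n ≥ 3`, `μ_{n+1} ∘ I_n^{br} = I_n ∘ μ_n` as ℂ-algebra
homomorphisms `ℂ[B_n] → TL_{n+1}`, where `I_n^{br}` is extended ℂ-linearly to the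
group algebras. -/
theorem statement13 (t4 : ℂ) (ht4 : t4 ≠ 0) (n : ℕ) (hn : 3 ≤ n)
    (Ibr : B n →* B (n + 1)) (hIbr : InsBrCond n Ibr)
    (μn : MonoidAlgebra ℂ (B n) →ₐ[ℂ] TL t4 n) (hμn : muCond t4 n μn)
    (μm : MonoidAlgebra ℂ (B (n + 1)) →ₐ[ℂ] TL t4 (n + 1)) (hμm : muCond t4 (n + 1) μm)
    (I : TL t4 n →ₐ[ℂ] TL t4 (n + 1)) (hI : InsCond t4 n I) :
    μm.comp ((MonoidAlgebra.lift ℂ (MonoidAlgebra ℂ (B (n + 1))) (B n))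
        ((MonoidAlgebra.of ℂ (B (n + 1))).comp Ibr)) = I.comp μn := by
  haveI : NeZero n := ⟨by omega⟩
  -- the two sides as monoid homomorphisms on the group
  set F1 : B n →* TL t4 (n + 1) :=
    μm.toRingHom.toMonoidHom.comp ((MonoidAlgebra.of ℂ (B (n + 1))).comp Ibr) with hF1
  set F2 : B n →* TL t4 (n + 1) :=
    (I.comp μn).toRingHom.toMonoidHom.comp (MonoidAlgebra.of ℂ (B n)) with hF2
  have hgen : ∀ x : BGen n, F1 (PresentedGroup.of x) = F2 (PresentedGroup.of x) := by
    intro x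
    have hF1' : ∀ g : B n, F1 g = μm (MonoidAlgebra.of ℂ (B (n + 1)) (Ibr g)) := fun _ => rfl
    have hF2' : ∀ g : B n, F2 g = I (μn (MonoidAlgebra.of ℂ (B n) g)) := fun _ => rfl
    cases x with
    | p =>
        have hx : (PresentedGroup.of (BGen.p) : B n) = ρB n := rfl
        rw [hx, hF1', hF2', hIbr.2.2]
        simp only [map_mul]
        rw [hμm.2,
          mu_of_inv ht4 μm hμm ((n : ℕ) : ZMod (n + 1)), hμn.2, hI.2.2.1]
    | s i =>
        have hx : (PresentedGroup.of (BGen.s i) : B n) = σB n i := rfl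
        rw [hx, hF1', hF2', hμn.1, map_add, map_smul]
        have hCt : I (Ct t4 n t4⁻¹) = Ct t4 (n + 1) t4⁻¹ := I.commutes t4⁻¹
        rw [hCt]
        rcases Nat.eq_zero_or_pos i.val with h0 | h1
        · -- i = 0 = (n : ZMod n)
          have hi : i = ((n : ℕ) : ZMod n) := by
            rw [ZMod.natCast_self]
            have := ZMod.natCast_rightInverse (n := n) i
            rw [← this, h0, Nat.cast_zero]
          subst hi
          rw [hIbr.2.1, hI.2.1]
          simp only [map_mul]
          rw [hμm.1, hμm.1,
            mu_of_inv ht4 μm hμm ((n : ℕ) : ZMod (n + 1))]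
          exact conj_lemma _ _ _ (AB_eq_one ht4 _)
        · -- 1 ≤ i.val ≤ n - 1
          have hval : i.val ≤ n - 1 := by
            have := ZMod.val_lt i
            omega
          have hi : ((i.val : ℕ) : ZMod n) = i := ZMod.natCast_rightInverse i
          rw [← hi, hIbr.1 i.val h1 hval, hμm.1, hI.1 i.val h1 hval]
  have key : ∀ g : B n, F1 g = F2 g := by
    intro g
    obtain ⟨w, rfl⟩ := PresentedGroup.mk_surjective (Brels n) g
    induction w using FreeGroup.induction_on with
    | C1 => rw [map_one, map_one, map_one]
    | of x => exact hgen x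
    | inv_of x ih =>
        rw [map_inv]
        exact monoidHom_inv_eq F1 F2 _ ih
    | mul x y ihx ihy => rw [map_mul, map_mul, map_mul, ihx, ihy]
  apply MonoidAlgebra.algHom_ext
  intro g
  have h1 : (MonoidAlgebra.single g (1 : ℂ)) = MonoidAlgebra.of ℂ (B n) g := rfl
  rw [h1]
  simp only [AlgHom.comp_apply, MonoidAlgebra.lift_of]
  exact key g
  exact Subsingleton.elim _ _


end SkeinTL
end
end

section
/- Let n ≥ 3 and let f_n : TL_n^B → TL_n and g_{n+1} : TL_{n+1} → TL_{n+1}^B be the algebra isomorphisms of the B-type identification. Then the composite algebra homomorphism g_{n+1} ∘ I_n ∘ f_n : TL_n^B → TL_{n+1}^B satisfies τ ↦ τ and e_i ↦ e_i for all 1 ≤ i ≤ n-1. -/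
noncomputable section

namespace SkeinTL

/-- Generators of the B-type affine Temperley-Lieb algebra `TL_n^B`:
`a` (= α), `t` (= τ) and `e i` for `1 ≤ i ≤ n-1`. -/
inductive TLBgen (n : ℕ) : Type
  | a : TLBgen n
  | t : TLBgen n
  | e : {i : ℕ // 1 ≤ i ∧ i < n} → TLBgen n

abbrev FB (n : ℕ) : Type := FreeAlgebra ℂ (TLBgen n)

def abf (n : ℕ) : FB n := FreeAlgebra.ι ℂ (TLBgen.a : TLBgen n)
def tbf (n : ℕ) : FB n := FreeAlgebra.ι ℂ (TLBgen.t : TLBgen n)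
def ebf (n : ℕ) (i : {i : ℕ // 1 ≤ i ∧ i < n}) : FB n := FreeAlgebra.ι ℂ (TLBgen.e i)

/-- The defining relations of `TL_n^B`: `eᵢ² = -(t^{1/2}+t^{-1/2})eᵢ`;
`eᵢeⱼ = eⱼeᵢ` (`|i-j| ≥ 2`); `eᵢe_{i±1}eᵢ = eᵢ`; `τeᵢ = eᵢτ` (`i > 1`);
`e₁τe₁ = αe₁ = e₁α`; `τ² = -t^{1/2}ατ - t`. -/
inductive TLBrel (t4 : ℂ) (n : ℕ) : FB n → FB n → Prop
  | esq (i : {i : ℕ // 1 ≤ i ∧ i < n}) :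
      TLBrel t4 n (ebf n i * ebf n i) ((-(t4 ^ 2 + t4⁻¹ ^ 2)) • ebf n i)
  | comm (i j : {i : ℕ // 1 ≤ i ∧ i < n})
      (h : (i : ℕ) + 2 ≤ (j : ℕ) ∨ (j : ℕ) + 2 ≤ (i : ℕ)) :
      TLBrel t4 n (ebf n i * ebf n j) (ebf n j * ebf n i)
  | ebe (i j : {i : ℕ // 1 ≤ i ∧ i < n})
      (h : (j : ℕ) = (i : ℕ) + 1 ∨ (i : ℕ) = (j : ℕ) + 1) :
      TLBrel t4 n (ebf n i * ebf n j * ebf n i) (ebf n i)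
  | te (i : {i : ℕ // 1 ≤ i ∧ i < n}) (h : 1 < (i : ℕ)) :
      TLBrel t4 n (tbf n * ebf n i) (ebf n i * tbf n)
  | ete (i : {i : ℕ // 1 ≤ i ∧ i < n}) (h : (i : ℕ) = 1) :
      TLBrel t4 n (ebf n i * tbf n * ebf n i) (abf n * ebf n i)
  | ae (i : {i : ℕ // 1 ≤ i ∧ i < n}) (h : (i : ℕ) = 1) :
      TLBrel t4 n (abf n * ebf n i) (ebf n i * abf n)
  | tsq : TLBrel t4 n (tbf n * tbf n)
      ((-(t4 ^ 2)) • (abf n * tbf n) - algebraMap ℂ (FB n) (t4 ^ 4))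

/-- The B-type affine Temperley-Lieb algebra `TL_n^B`. -/
abbrev TLB (t4 : ℂ) (n : ℕ) : Type := RingQuot (TLBrel t4 n)

/-- The generator `α` of `TL_n^B`. -/
def Ab (t4 : ℂ) (n : ℕ) : TLB t4 n := RingQuot.mkAlgHom ℂ (TLBrel t4 n) (abf n)
/-- The generator `τ` of `TL_n^B`. -/
def Tb (t4 : ℂ) (n : ℕ) : TLB t4 n := RingQuot.mkAlgHom ℂ (TLBrel t4 n) (tbf n)
/-- The generator `e_i` (`1 ≤ i ≤ n-1`) of `TL_n^B`. -/
def Eb (t4 : ℂ) (n : ℕ) (i : {i : ℕ // 1 ≤ i ∧ i < n}) : TLB t4 n :=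
  RingQuot.mkAlgHom ℂ (TLBrel t4 n) (ebf n i)
def Ctb (t4 : ℂ) (n : ℕ) (c : ℂ) : TLB t4 n := algebraMap ℂ (TLB t4 n) c

/-- The defining conditions of the isomorphism `f_n : TL_n^B → TL_n`:
`e_i ↦ e_i` (`1 ≤ i ≤ n-1`) and
`τ ↦ −t^{3/4}ρ(t^{-1/4}e_{n-1} + t^{1/4})(t^{-1/4}e_{n-2} + t^{1/4})⋯(t^{-1/4}e_1 + t^{1/4})`. -/
def fCond (t4 : ℂ) (n : ℕ) (F : TLB t4 n ≃ₐ[ℂ] TL t4 n) : Prop :=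
  (∀ (i : ℕ) (h1 : 1 ≤ i) (h2 : i < n),
      F (Eb t4 n ⟨i, h1, h2⟩) = E t4 n (i : ZMod n)) ∧
  F (Tb t4 n) = (-(t4 ^ 3)) • (R t4 n *
      (List.ofFn (fun k : Fin (n - 1) =>
        t4⁻¹ • E t4 n ((n - 1 - (k : ℕ) : ℕ) : ZMod n) + Ct t4 n t4)).prod)

/-- The defining conditions of the inverse isomorphism `g_n : TL_n → TL_n^B`:
`e_i ↦ e_i` (`1 ≤ i ≤ n-1`) and
`ρ ↦ −t^{-3/4}τ(t^{1/4}e_1 + t^{-1/4})(t^{1/4}e_2 + t^{-1/4})⋯(t^{1/4}e_{n-1} + t^{-1/4})`. -/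
def gCond (t4 : ℂ) (n : ℕ) (G : TL t4 n ≃ₐ[ℂ] TLB t4 n) : Prop :=
  (∀ (i : ℕ) (h1 : 1 ≤ i) (h2 : i < n),
      G (E t4 n (i : ZMod n)) = Eb t4 n ⟨i, h1, h2⟩) ∧
  G (R t4 n) = (-(t4⁻¹ ^ 3)) • (Tb t4 n *
      (List.ofFn (fun k : Fin (n - 1) =>
        t4 • Eb t4 n ⟨(k : ℕ) + 1, Nat.le_add_left 1 k, by have := k.isLt; omega⟩ +
          Ctb t4 n t4⁻¹)).prod)

/-- for `n ≥ 3`, the composite `g_{n+1} ∘ I_n ∘ f_n : TL_n^B → TL_{n+1}^B`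
satisfies `τ ↦ τ` and `e_i ↦ e_i` for all `1 ≤ i ≤ n-1`. -/
theorem statement18 (t4 : ℂ) (ht4 : t4 ≠ 0) (n : ℕ) (hn : 3 ≤ n)
    (fn : TLB t4 n ≃ₐ[ℂ] TL t4 n) (hfn : fCond t4 n fn)
    (fm : TLB t4 (n + 1) ≃ₐ[ℂ] TL t4 (n + 1)) (hfm : fCond t4 (n + 1) fm)
    (I : TL t4 n →ₐ[ℂ] TL t4 (n + 1)) (hI : InsCond t4 n I) :
    fm.symm (I (fn (Tb t4 n))) = Tb t4 (n + 1) ∧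
    ∀ (i : ℕ) (h1 : 1 ≤ i) (h2 : i < n),
      fm.symm (I (fn (Eb t4 n ⟨i, h1, h2⟩))) =
        Eb t4 (n + 1) ⟨i, h1, Nat.lt_succ_of_lt h2⟩ := by
  obtain ⟨hfn1, hfn2⟩ := hfn
  obtain ⟨hfm1, hfm2⟩ := hfm
  obtain ⟨hI1, hI2, hI3, hI4⟩ := hI
  constructor
  · obtain ⟨m, rfl⟩ : ∃ m, n = m + 1 := ⟨n - 1, by omega⟩
    apply fm.injective
    rw [fm.apply_symm_apply, hfm2, hfn2, map_smul, map_mul, map_list_prod, hI3]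
    have hlist1 : List.map (⇑I) (List.ofFn (fun k : Fin (m + 1 - 1) =>
        t4⁻¹ • E t4 (m + 1) ((m + 1 - 1 - (k : ℕ) : ℕ) : ZMod (m + 1)) + Ct t4 (m + 1) t4)) =
        List.ofFn (fun k : Fin (m + 1 - 1) =>
        t4⁻¹ • E t4 (m + 1 + 1) ((m + 1 - 1 - (k : ℕ) : ℕ) : ZMod (m + 1 + 1)) +
          Ct t4 (m + 1 + 1) t4) := by
      rw [List.map_ofFn]
      congr 1
      funext k
      have hk := k.isLt
      simp only [Function.comp_apply, map_add, map_smul,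
        hI1 (m + 1 - 1 - (k : ℕ)) (by omega) (by omega)]
      congr 1
      exact I.commutes t4
    have hlist2 : (List.ofFn (fun k : Fin (m + 1 + 1 - 1) =>
        t4⁻¹ • E t4 (m + 1 + 1) ((m + 1 + 1 - 1 - (k : ℕ) : ℕ) : ZMod (m + 1 + 1)) +
          Ct t4 (m + 1 + 1) t4)) =
        (t4⁻¹ • E t4 (m + 1 + 1) ((m + 1 : ℕ) : ZMod (m + 1 + 1)) + Ct t4 (m + 1 + 1) t4) ::
        List.ofFn (fun k : Fin (m + 1 - 1) =>
        t4⁻¹ • E t4 (m + 1 + 1) ((m + 1 - 1 - (k : ℕ) : ℕ) : ZMod (m + 1 + 1)) +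
          Ct t4 (m + 1 + 1) t4) := by
      show (List.ofFn (fun k : Fin (m + 1) =>
        t4⁻¹ • E t4 (m + 1 + 1) ((m + 1 + 1 - 1 - (k : ℕ) : ℕ) : ZMod (m + 1 + 1)) +
          Ct t4 (m + 1 + 1) t4)) = _
      rw [List.ofFn_succ]
      congr 2
      funext k
      have h : m + 1 + 1 - 1 - ((k : ℕ) + 1) = m + 1 - 1 - (k : ℕ) := by omega
      rw [Fin.val_succ, h]
    rw [hlist1, hlist2, List.prod_cons, mul_assoc]
  · intro i h1 h2
    rw [hfn1 i h1 h2, hI1 i h1 (by omega), ← hfm1 i h1 (Nat.lt_succ_of_lt h2),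
      fm.symm_apply_apply]

end SkeinTL
end
end
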